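/- arXiv:2305.02072 — 9 statements merged into one kernel-verified Lean document; each statement's English description precedes it below -/
import Mathlib

section
/- Let A = (α,β/K) be a division quaternion algebra over a number field K and let p ∈ K[X] be a monic irreducible polynomial. Then p is reducible in A[X] if and only if there exist polynomials q₀, q₁, q₂, q₃ ∈ K[X] such that p = q₀² − α·q₁² − β·q₂² + αβ·q₃² (i.e., p is represented over K[X] by the norm form of A). -/
open Polynomial Quaternion

namespace CentralAux

variable {R S : Type*} [CommRing R] [CommRing S] (a b : R)

/-- The (reduced) norm of a quaternion over a commutative ring. -/
def qnorm {a b : R} (x : ℍ[R,a,b]) : R :=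
  x.re ^ 2 - a * x.imI ^ 2 - b * x.imJ ^ 2 + a * b * x.imK ^ 2

theorem coe_qnorm {a b : R} (x : ℍ[R,a,b]) : ((qnorm x : R) : ℍ[R,a,b]) = x * star x := by
  ext <;>
    simp only [qnorm, QuaternionAlgebra.re_coe, QuaternionAlgebra.imI_coe,
      QuaternionAlgebra.imJ_coe, QuaternionAlgebra.imK_coe, QuaternionAlgebra.re_mul,
      QuaternionAlgebra.imI_mul, QuaternionAlgebra.imJ_mul, QuaternionAlgebra.imK_mul,
      QuaternionAlgebra.re_star, QuaternionAlgebra.imI_star, QuaternionAlgebra.imJ_star,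
      QuaternionAlgebra.imK_star] <;> ring

theorem coe_qnorm' {a b : R} (x : ℍ[R,a,b]) : ((qnorm x : R) : ℍ[R,a,b]) = star x * x := by
  ext <;>
    simp only [qnorm, QuaternionAlgebra.re_coe, QuaternionAlgebra.imI_coe,
      QuaternionAlgebra.imJ_coe, QuaternionAlgebra.imK_coe, QuaternionAlgebra.re_mul,
      QuaternionAlgebra.imI_mul, QuaternionAlgebra.imJ_mul, QuaternionAlgebra.imK_mul,
      QuaternionAlgebra.re_star, QuaternionAlgebra.imI_star, QuaternionAlgebra.imJ_star,
      QuaternionAlgebra.imK_star] <;> ring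

@[simp] theorem qnorm_one {a b : R} : qnorm (1 : ℍ[R,a,b]) = 1 := by simp [qnorm]

@[simp] theorem qnorm_zero {a b : R} : qnorm (0 : ℍ[R,a,b]) = 0 := by simp [qnorm]

@[simp] theorem qnorm_coe {a b : R} (r : R) : qnorm ((r : R) : ℍ[R,a,b]) = r ^ 2 := by
  simp [qnorm]

theorem qnorm_star {a b : R} (x : ℍ[R,a,b]) : qnorm (star x) = qnorm x := by
  simp [qnorm]

theorem qnorm_mul {a b : R} (x y : ℍ[R,a,b]) : qnorm (x * y) = qnorm x * qnorm y := by
  apply QuaternionAlgebra.coe_injective (c₁ := a) (c₂ := 0) (c₃ := b)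
  rw [coe_qnorm, star_mul]
  calc x * y * (star y * star x)
      = x * (y * star y) * star x := by noncomm_ring
    _ = x * ↑(qnorm y) * star x := by rw [← coe_qnorm]
    _ = ↑(qnorm y) * (x * star x) := by
        rw [← QuaternionAlgebra.coe_commutes (qnorm y) x, mul_assoc]
    _ = ↑(qnorm y) * ↑(qnorm x) := by rw [coe_qnorm x]
    _ = ↑(qnorm x * qnorm y) := by rw [← QuaternionAlgebra.coe_mul, mul_comm]

theorem isUnit_qnorm {a b : R} {x : ℍ[R,a,b]} (h : IsUnit x) : IsUnit (qnorm x) := by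
  obtain ⟨u, rfl⟩ := h
  exact IsUnit.of_mul_eq_one (qnorm (↑u⁻¹ : ℍ[R,a,b]))
    (by rw [← qnorm_mul, Units.mul_inv, qnorm_one])

theorem isUnit_of_isUnit_qnorm {a b : R} {x : ℍ[R,a,b]} (h : IsUnit (qnorm x)) : IsUnit x := by
  obtain ⟨u, hu⟩ := h
  refine ⟨⟨x, ((↑u⁻¹ : R) : ℍ[R,a,b]) * star x, ?_, ?_⟩, rfl⟩
  · rw [← mul_assoc, ← QuaternionAlgebra.coe_commutes, mul_assoc, ← coe_qnorm,
      ← QuaternionAlgebra.coe_mul, ← hu, Units.inv_mul, QuaternionAlgebra.coe_one]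
  · rw [mul_assoc, ← coe_qnorm', ← QuaternionAlgebra.coe_mul, ← hu, Units.inv_mul,
      QuaternionAlgebra.coe_one]

/-- Componentwise map of quaternion algebras along a ring hom. -/
def qmap (f : R →+* S) : ℍ[R,a,b] →+* ℍ[S, f a, f b] where
  toFun x := ⟨f x.re, f x.imI, f x.imJ, f x.imK⟩
  map_one' := by ext <;> simp
  map_mul' x y := by ext <;> simp
  map_zero' := by ext <;> simp
  map_add' x y := by ext <;> simp

@[simp] theorem qmap_re (f : R →+* S) (x : ℍ[R,a,b]) : (qmap a b f x).re = f x.re := rfl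
@[simp] theorem qmap_imI (f : R →+* S) (x : ℍ[R,a,b]) : (qmap a b f x).imI = f x.imI := rfl
@[simp] theorem qmap_imJ (f : R →+* S) (x : ℍ[R,a,b]) : (qmap a b f x).imJ = f x.imJ := rfl
@[simp] theorem qmap_imK (f : R →+* S) (x : ℍ[R,a,b]) : (qmap a b f x).imK = f x.imK := rfl

theorem qnorm_qmap (f : R →+* S) (x : ℍ[R,a,b]) : qnorm (qmap a b f x) = f (qnorm x) := by
  simp [qnorm, map_sub, map_add, map_mul, map_pow]

noncomputable def Phi : (ℍ[R,a,b])[X] →+* ℍ[R[X], C a, C b] :=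
  eval₂RingHom' (qmap a b (C : R →+* R[X])) ((X : R[X]) : ℍ[R[X], C a, C b])
    (fun q => (QuaternionAlgebra.coe_commute (X : R[X]) (qmap a b C q)).symm)

theorem Phi_apply (f : (ℍ[R,a,b])[X]) :
    Phi a b f = eval₂ (qmap a b (C : R →+* R[X])) ((X : R[X]) : ℍ[R[X], C a, C b]) f := rfl

@[simp] theorem Phi_C (q : ℍ[R,a,b]) : Phi a b (Polynomial.C q) = qmap a b C q := by
  rw [Phi_apply, eval₂_C]

@[simp] theorem Phi_X : Phi a b (X : (ℍ[R,a,b])[X]) = ((X : R[X]) : ℍ[R[X], C a, C b]) := by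
  rw [Phi_apply, eval₂_X]

theorem Phi_monomial (n : ℕ) (q : ℍ[R,a,b]) :
    Phi a b (monomial n q) = qmap a b C q * ((X : R[X]) : ℍ[R[X], C a, C b]) ^ n := by
  rw [Phi_apply, eval₂_monomial]

theorem Phi_map (q : R[X]) :
    Phi a b (q.map (algebraMap R ℍ[R,a,b])) = ((q : R[X]) : ℍ[R[X], C a, C b]) := by
  have h : (Phi a b).comp (mapRingHom (algebraMap R ℍ[R,a,b])) =
      algebraMap R[X] ℍ[R[X], C a, C b] := by
    apply ringHom_ext
    · intro r
      ext <;> simp [qmap, QuaternionAlgebra.coe_algebraMap]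
    · simp [QuaternionAlgebra.coe_algebraMap]
  calc Phi a b (q.map (algebraMap R ℍ[R,a,b]))
      = ((Phi a b).comp (mapRingHom (algebraMap R ℍ[R,a,b]))) q := rfl
    _ = algebraMap R[X] ℍ[R[X], C a, C b] q := by rw [h]
    _ = _ := by rw [QuaternionAlgebra.coe_algebraMap]

noncomputable def toPoly (x : ℍ[R[X], C a, C b]) : (ℍ[R,a,b])[X] :=
  x.re.map (algebraMap R ℍ[R,a,b]) +
    x.imI.map (algebraMap R ℍ[R,a,b]) * Polynomial.C ⟨0,1,0,0⟩ +
    x.imJ.map (algebraMap R ℍ[R,a,b]) * Polynomial.C ⟨0,0,1,0⟩ +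
    x.imK.map (algebraMap R ℍ[R,a,b]) * Polynomial.C ⟨0,0,0,1⟩

theorem toPoly_add (x y : ℍ[R[X], C a, C b]) :
    toPoly a b (x + y) = toPoly a b x + toPoly a b y := by
  simp only [toPoly, QuaternionAlgebra.re_add, QuaternionAlgebra.imI_add,
    QuaternionAlgebra.imJ_add, QuaternionAlgebra.imK_add, Polynomial.map_add, add_mul]
  abel

theorem Phi_toPoly (x : ℍ[R[X], C a, C b]) : Phi a b (toPoly a b x) = x := by
  simp only [toPoly, map_add, map_mul, Phi_map, Phi_C]
  ext <;> simp [qmap]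

theorem toPoly_Phi (f : (ℍ[R,a,b])[X]) : toPoly a b (Phi a b f) = f := by
  induction f using Polynomial.induction_on' with
  | add p q hp hq => rw [map_add, toPoly_add, hp, hq]
  | monomial n q =>
    rw [Phi_monomial, ← QuaternionAlgebra.coe_pow]
    have hcomp : (qmap a b (C : R →+* R[X]) q * (((X : R[X]) ^ n : R[X]) : ℍ[R[X], C a, C b]))
        = (⟨C q.re * X ^ n, C q.imI * X ^ n, C q.imJ * X ^ n, C q.imK * X ^ n⟩ :
            ℍ[R[X], C a, C b]) := by
      ext <;>
        simp only [qmap_re, qmap_imI, qmap_imJ, qmap_imK, QuaternionAlgebra.re_mul,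
          QuaternionAlgebra.imI_mul, QuaternionAlgebra.imJ_mul, QuaternionAlgebra.imK_mul,
          QuaternionAlgebra.re_coe, QuaternionAlgebra.imI_coe, QuaternionAlgebra.imJ_coe,
          QuaternionAlgebra.imK_coe, mul_zero, zero_mul, add_zero, zero_add, sub_zero]
    rw [hcomp]
    show (C q.re * X ^ n).map (algebraMap R ℍ[R,a,b]) +
        (C q.imI * X ^ n).map (algebraMap R ℍ[R,a,b]) * Polynomial.C ⟨0,1,0,0⟩ +
        (C q.imJ * X ^ n).map (algebraMap R ℍ[R,a,b]) * Polynomial.C ⟨0,0,1,0⟩ +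
        (C q.imK * X ^ n).map (algebraMap R ℍ[R,a,b]) * Polynomial.C ⟨0,0,0,1⟩ = monomial n q
    simp only [Polynomial.map_mul, Polynomial.map_C, Polynomial.map_pow, Polynomial.map_X]
    rw [mul_assoc, X_pow_mul, ← mul_assoc, ← C_mul,
        mul_assoc, X_pow_mul, ← mul_assoc, ← C_mul,
        mul_assoc, X_pow_mul, ← mul_assoc, ← C_mul,
        ← add_mul, ← add_mul, ← add_mul, ← map_add, ← map_add, ← map_add,
        C_mul_X_pow_eq_monomial]
    congr 1
    ext <;> simp [QuaternionAlgebra.coe_algebraMap]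

noncomputable def Theta : (ℍ[R,a,b])[X] ≃+* ℍ[R[X], C a, C b] :=
  { Phi a b with
    invFun := toPoly a b
    left_inv := toPoly_Phi a b
    right_inv := Phi_toPoly a b }

theorem Theta_apply (f : (ℍ[R,a,b])[X]) : Theta a b f = Phi a b f := rfl

section Field

variable {K : Type*} [Field K] {α β : K}

theorem qnorm_ne_zero (hdiv : ∀ x : ℍ[K,α,β], x ≠ 0 → IsUnit x)
    {v : ℍ[K,α,β]} (hv : v ≠ 0) : qnorm v ≠ 0 := by
  intro h
  have h1 : v * star v = 0 := by
    rw [← coe_qnorm, h, QuaternionAlgebra.coe_zero]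
  have h2 : star v = 0 := ((hdiv v hv).mul_right_eq_zero).mp h1
  apply hv
  simpa using congrArg star h2

theorem key_coeff (Q : ℍ[K[X], C α, C β]) (hQ : Q ≠ 0) :
    ∃ (d : ℕ) (v : ℍ[K,α,β]), v ≠ 0 ∧ (qnorm Q).coeff (d + d) = qnorm v ∧
      (qnorm Q).natDegree ≤ d + d := by
  set d := max (max Q.re.natDegree Q.imI.natDegree) (max Q.imJ.natDegree Q.imK.natDegree)
    with hd
  have hre : Q.re.natDegree ≤ d := by omega
  have himI : Q.imI.natDegree ≤ d := by omega
  have himJ : Q.imJ.natDegree ≤ d := by omega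
  have himK : Q.imK.natDegree ≤ d := by omega
  refine ⟨d, ⟨Q.re.coeff d, Q.imI.coeff d, Q.imJ.coeff d, Q.imK.coeff d⟩, ?_, ?_, ?_⟩
  · intro hv
    obtain ⟨h1, h2, h3, h4⟩ := QuaternionAlgebra.ext_iff.mp hv
    simp only [QuaternionAlgebra.re_zero, QuaternionAlgebra.imI_zero,
      QuaternionAlgebra.imJ_zero, QuaternionAlgebra.imK_zero] at h1 h2 h3 h4
    by_cases hd0 : d = 0
    · apply hQ
      have hz : ∀ q : K[X], q.natDegree ≤ d → q.coeff d = 0 → q = 0 := by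
        intro q hqd hq0
        rw [hd0] at hqd hq0
        rw [Polynomial.eq_C_of_natDegree_le_zero hqd, hq0, map_zero]
      exact QuaternionAlgebra.ext (hz _ hre h1) (hz _ himI h2) (hz _ himJ h3) (hz _ himK h4)
    · have hkey : ∀ q : K[X], q.natDegree = d → q.coeff d = 0 → False := by
        intro q hqd hq0
        apply hd0
        have hq : q = 0 := leadingCoeff_eq_zero.mp (by rwa [leadingCoeff, hqd])
        rw [← hqd, hq, natDegree_zero]
      have : d = Q.re.natDegree ∨ d = Q.imI.natDegree ∨ d = Q.imJ.natDegree ∨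
          d = Q.imK.natDegree := by omega
      rcases this with h | h | h | h
      exacts [hkey _ h.symm h1, hkey _ h.symm h2, hkey _ h.symm h3, hkey _ h.symm h4]
  · have h2 : ∀ q : K[X], q.natDegree ≤ d → (q ^ 2).coeff (d + d) = q.coeff d ^ 2 := by
      intro q h
      rw [sq, sq, coeff_mul_add_eq_of_natDegree_le h h]
    show (Q.re ^ 2 - C α * Q.imI ^ 2 - C β * Q.imJ ^ 2 + C α * C β * Q.imK ^ 2).coeff (d + d)
        = _
    rw [← C_mul, coeff_add, coeff_sub, coeff_sub, coeff_C_mul, coeff_C_mul, coeff_C_mul,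
      h2 _ hre, h2 _ himI, h2 _ himJ, h2 _ himK]
    rfl
  · have hb : ∀ (γ : K) (q : K[X]), q.natDegree ≤ d → (C γ * q ^ 2).natDegree ≤ d + d := by
      intro γ q h
      refine (natDegree_C_mul_le _ _).trans (natDegree_pow_le.trans ?_)
      omega
    show (Q.re ^ 2 - C α * Q.imI ^ 2 - C β * Q.imJ ^ 2 + C α * C β * Q.imK ^ 2).natDegree
        ≤ d + d
    rw [← C_mul]
    refine (natDegree_add_le _ _).trans (max_le ((natDegree_sub_le _ _).trans
      (max_le ((natDegree_sub_le _ _).trans (max_le ?_ ?_)) ?_)) ?_)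
    · exact natDegree_pow_le.trans (by omega)
    · exact hb α _ himI
    · exact hb β _ himJ
    · exact hb _ _ himK

end Field

end CentralAux

open CentralAux

/-- Let `A = (α,β/K)` be a division quaternion algebra over a number field `K`
and `p ∈ K[X]` a monic irreducible polynomial.  Then `p` is reducible in `A[X]` (i.e. a product
of two non-units of `A[X]`) if and only if `p` is represented over `K[X]` by the norm form
`⟨1, −α, −β, αβ⟩` of `A`. -/
theorem central_reducible_iff_norm_form {K : Type*} [Field K] [NumberField K]
    (α β : K) (hα : α ≠ 0) (hβ : β ≠ 0)
    (hdiv : ∀ x : ℍ[K,α,β], x ≠ 0 → IsUnit x)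
    (p : K[X]) (hm : p.Monic) (hirr : Irreducible p) :
    (∃ f g : Polynomial ℍ[K,α,β], ¬IsUnit f ∧ ¬IsUnit g ∧
        p.map (algebraMap K ℍ[K,α,β]) = f * g) ↔
      ∃ q₀ q₁ q₂ q₃ : K[X],
        p = q₀ ^ 2 - Polynomial.C α * q₁ ^ 2 - Polynomial.C β * q₂ ^ 2
          + Polynomial.C α * Polynomial.C β * q₃ ^ 2 := by
  have hp0 : p ≠ 0 := hirr.ne_zero
  constructor
  · rintro ⟨f, g, hf, hg, hfg⟩
    set F : ℍ[K[X], C α, C β] := Theta α β f with hF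
    set G : ℍ[K[X], C α, C β] := Theta α β g with hG
    have hfg' : ((p : K[X]) : ℍ[K[X], C α, C β]) = F * G := by
      rw [hF, hG, ← map_mul, ← hfg, Theta_apply, Phi_map]
    have hN : qnorm F * qnorm G = p * p := by
      rw [← qnorm_mul, ← hfg', qnorm_coe, sq]
    have hprime : Prime p := UniqueFactorizationMonoid.irreducible_iff_prime.mp hirr
    have hnf : ¬ IsUnit (qnorm F) := by
      intro h
      apply hf
      have h2 : IsUnit F := isUnit_of_isUnit_qnorm h
      have h3 := h2.map (Theta α β).symm
      rwa [hF, RingEquiv.symm_apply_apply] at h3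
    have hng : ¬ IsUnit (qnorm G) := by
      intro h
      apply hg
      have h2 : IsUnit G := isUnit_of_isUnit_qnorm h
      have h3 := h2.map (Theta α β).symm
      rwa [hG, RingEquiv.symm_apply_apply] at h3
    obtain ⟨t, ht, htu⟩ : ∃ t, qnorm F = p * t ∧ IsUnit t := by
      rcases hprime.2.2 _ _ (show p ∣ qnorm F * qnorm G from ⟨p, hN⟩) with ⟨t, ht⟩ | ⟨t, ht⟩
      · refine ⟨t, ht, ?_⟩
        have h5 : p * (t * qnorm G) = p * p := by rw [← hN, ht]; ring
        rcases hirr.isUnit_or_isUnit (mul_left_cancel₀ hp0 h5).symm with h | h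
        · exact h
        · exact absurd h hng
      · have h5 : p * (qnorm F * t) = p * p := by rw [← hN, ht]; ring
        have h4 := mul_left_cancel₀ hp0 h5
        rcases hirr.isUnit_or_isUnit h4.symm with h | h
        · exact absurd h hnf
        · obtain ⟨u, rfl⟩ := h
          refine ⟨↑u⁻¹, ?_, u⁻¹.isUnit⟩
          rw [← h4, mul_assoc, Units.mul_inv, mul_one]
    obtain ⟨c, hcu, hc⟩ := Polynomial.isUnit_iff.mp htu
    have hc0 : c ≠ 0 := hcu.ne_zero
    have hqF : qnorm F = p * C c := by rw [ht, hc]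
    have hF0 : F ≠ 0 := by
      intro h
      rw [h, qnorm_zero] at hqF
      exact (mul_ne_zero hp0 (C_ne_zero.mpr hc0)) hqF.symm
    obtain ⟨d, v, hv0, hcoeff, hdeg⟩ := key_coeff F hF0
    have hqv : qnorm v ≠ 0 := qnorm_ne_zero hdiv hv0
    have hdeg' : (qnorm F).natDegree = d + d :=
      le_antisymm hdeg (le_natDegree_of_ne_zero (by rw [hcoeff]; exact hqv))
    have hlc : (qnorm F).leadingCoeff = qnorm v := by
      rw [leadingCoeff, hdeg', hcoeff]
    have hc_eq : c = qnorm v := by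
      rw [← hlc, hqF, leadingCoeff_mul, hm.leadingCoeff, one_mul, leadingCoeff_C]
    obtain ⟨u, hu⟩ := hdiv v hv0
    have hinv : ((↑u⁻¹ : ℍ[K,α,β])) * v = 1 := by rw [← hu]; exact u.inv_mul
    have hw : qnorm ((↑u⁻¹ : ℍ[K,α,β])) * qnorm v = 1 := by
      rw [← qnorm_mul, hinv, qnorm_one]
    set G' : ℍ[K[X], C α, C β] := qmap α β C (↑u⁻¹ : ℍ[K,α,β]) * F with hG'def
    have hG' : qnorm G' = p := by
      rw [hG'def, qnorm_mul, qnorm_qmap, hqF, hc_eq, mul_left_comm, ← C_mul, hw, C_1,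
        mul_one]
    exact ⟨G'.re, G'.imI, G'.imJ, G'.imK, hG'.symm⟩
  · rintro ⟨q₀, q₁, q₂, q₃, hq⟩
    set Q : ℍ[K[X], C α, C β] := ⟨q₀, q₁, q₂, q₃⟩ with hQdef
    have hpq : p = qnorm Q := hq
    have hnotu : ¬ IsUnit (qnorm Q) := by rw [← hpq]; exact hirr.not_isUnit
    refine ⟨(Theta α β).symm Q, (Theta α β).symm (star Q), ?_, ?_, ?_⟩
    · intro h
      have h2 := h.map (Theta α β)
      rw [RingEquiv.apply_symm_apply] at h2
      exact hnotu (isUnit_qnorm h2)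
    · intro h
      have h2 := h.map (Theta α β)
      rw [RingEquiv.apply_symm_apply] at h2
      have := isUnit_qnorm h2
      rw [qnorm_star] at this
      exact hnotu this
    · apply (Theta α β).injective
      rw [map_mul, RingEquiv.apply_symm_apply, RingEquiv.apply_symm_apply,
        Theta_apply, Phi_map, hpq, coe_qnorm]
end

section
/- Let A = (α,β/K) be a division quaternion algebra over a number field K, let p ∈ K[X] be a monic irreducible polynomial, and let L = K[X]/(p) be the field extension of K obtained by adjoining a root of p. Then p remains irreducible in A[X] if and only if the quaternion algebra A ⊗ L = (α,β/L) does not split, i.e., if and only if (α,β/L) is a division algebra. -/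
open Polynomial Quaternion

section QCongr

variable {K L : Type*} [CommRing K] [CommRing L] (σ : K →+* L) (α β : K)

/-- Componentwise map of quaternion algebras along a ring hom. -/
def qCongr : ℍ[K,α,β] →+* ℍ[L, σ α, σ β] where
  toFun q := ⟨σ q.re, σ q.imI, σ q.imJ, σ q.imK⟩
  map_one' := by ext <;> simp
  map_zero' := by ext <;> simp
  map_add' x y := by ext <;> simp
  map_mul' x y := by
    ext <;> simp [QuaternionAlgebra.re_mul, QuaternionAlgebra.imI_mul,
      QuaternionAlgebra.imJ_mul, QuaternionAlgebra.imK_mul]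

@[simp] theorem qCongr_re (q : ℍ[K,α,β]) : (qCongr σ α β q).re = σ q.re := rfl
@[simp] theorem qCongr_imI (q : ℍ[K,α,β]) : (qCongr σ α β q).imI = σ q.imI := rfl
@[simp] theorem qCongr_imJ (q : ℍ[K,α,β]) : (qCongr σ α β q).imJ = σ q.imJ := rfl
@[simp] theorem qCongr_imK (q : ℍ[K,α,β]) : (qCongr σ α β q).imK = σ q.imK := rfl

theorem qCongr_coe (c : K) : qCongr σ α β (c : ℍ[K,α,β]) = ((σ c : L) : ℍ[L,σ α,σ β]) := by
  ext <;> simp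

end QCongr

section Comp

variable {K A : Type*} [CommRing K] [Ring A]

/-- Extract a "component polynomial" of a polynomial over `A` along an additive map `s`. -/
noncomputable def pComp (s : A →+ K) (f : A[X]) : K[X] :=
  f.sum fun n a => monomial n (s a)

theorem pComp_coeff (s : A →+ K) (f : A[X]) (m : ℕ) :
    (pComp s f).coeff m = s (f.coeff m) := by
  rw [pComp, Polynomial.sum, finset_sum_coeff]
  simp only [coeff_monomial]
  rw [Finset.sum_ite_eq' f.support m fun n => s (f.coeff n)]
  by_cases h : m ∈ f.support
  · simp [h]
  · simp only [h, if_false]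
    rw [Polynomial.notMem_support_iff.mp h, map_zero]

theorem pComp_add (s : A →+ K) (f g : A[X]) :
    pComp s (f + g) = pComp s f + pComp s g := by
  ext m; simp [pComp_coeff]

theorem pComp_monomial (s : A →+ K) (n : ℕ) (a : A) :
    pComp s (monomial n a) = monomial n (s a) := by
  ext m
  simp only [pComp_coeff, coeff_monomial]
  split_ifs <;> simp

theorem pComp_degree_le (s : A →+ K) (f : A[X]) : (pComp s f).degree ≤ f.degree := by
  refine (degree_le_iff_coeff_zero _ _).mpr fun m hm => ?_
  rw [pComp_coeff, coeff_eq_zero_of_degree_lt hm, map_zero]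

end Comp

section Phi

variable {K : Type*} [Field K] (α β : K) (p : K[X])

/-- The evaluation homomorphism from `A[X]` to `A ⊗ L`, sending `X` to the root of `p`. -/
noncomputable def Phi : (ℍ[K,α,β])[X] →+*
    ℍ[AdjoinRoot p, algebraMap K (AdjoinRoot p) α, algebraMap K (AdjoinRoot p) β] :=
  eval₂RingHom' (qCongr (algebraMap K (AdjoinRoot p)) α β)
    ((AdjoinRoot.root p : AdjoinRoot p) :
      ℍ[AdjoinRoot p, algebraMap K (AdjoinRoot p) α, algebraMap K (AdjoinRoot p) β])
    fun a => (QuaternionAlgebra.coe_commute _ _).symm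

theorem Phi_apply (f : (ℍ[K,α,β])[X]) :
    Phi α β p f = eval₂ (qCongr (algebraMap K (AdjoinRoot p)) α β)
      ((AdjoinRoot.root p : AdjoinRoot p) :
        ℍ[AdjoinRoot p, algebraMap K (AdjoinRoot p) α, algebraMap K (AdjoinRoot p) β]) f := rfl

theorem Phi_C (a : ℍ[K,α,β]) :
    Phi α β p (C a) = qCongr (algebraMap K (AdjoinRoot p)) α β a := by
  rw [Phi_apply, eval₂_C]

theorem Phi_map_algebraMap (q : K[X]) :
    Phi α β p (q.map (algebraMap K ℍ[K,α,β])) = ((AdjoinRoot.mk p q : AdjoinRoot p) :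
      ℍ[AdjoinRoot p, algebraMap K (AdjoinRoot p) α, algebraMap K (AdjoinRoot p) β]) := by
  rw [Phi_apply, eval₂_map]
  have h1 : (qCongr (algebraMap K (AdjoinRoot p)) α β).comp (algebraMap K ℍ[K,α,β])
      = (algebraMap (AdjoinRoot p)
          ℍ[AdjoinRoot p, algebraMap K (AdjoinRoot p) α, algebraMap K (AdjoinRoot p) β]).comp
          (algebraMap K (AdjoinRoot p)) := by
    refine RingHom.ext fun c => ?_
    rw [RingHom.comp_apply, RingHom.comp_apply, QuaternionAlgebra.algebraMap_eq,
      QuaternionAlgebra.algebraMap_eq]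
    ext <;> simp [-AdjoinRoot.algebraMap_eq]
  have h2 : ((AdjoinRoot.root p : AdjoinRoot p) :
      ℍ[AdjoinRoot p, algebraMap K (AdjoinRoot p) α, algebraMap K (AdjoinRoot p) β])
      = algebraMap (AdjoinRoot p) _ (AdjoinRoot.root p) := by
    rw [QuaternionAlgebra.coe_algebraMap]
  rw [h1, h2, ← hom_eval₂, ← aeval_def, AdjoinRoot.aeval_eq]
  rw [QuaternionAlgebra.coe_algebraMap]

theorem Phi_p :
    Phi α β p (p.map (algebraMap K ℍ[K,α,β])) = 0 := by
  rw [Phi_map_algebraMap, AdjoinRoot.mk_self]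
  exact QuaternionAlgebra.coe_zero

theorem Phi_component (s : ℍ[K,α,β] →+ K)
    (t : ℍ[AdjoinRoot p, algebraMap K (AdjoinRoot p) α, algebraMap K (AdjoinRoot p) β] →+
      AdjoinRoot p)
    (hc : ∀ (a : ℍ[K,α,β]) (x : AdjoinRoot p),
      t (x • qCongr (algebraMap K (AdjoinRoot p)) α β a) = x * algebraMap K (AdjoinRoot p) (s a))
    (f : (ℍ[K,α,β])[X]) :
    t (Phi α β p f) = AdjoinRoot.mk p (pComp s f) := by
  induction f using Polynomial.induction_on' with
  | add f g hf hg => rw [map_add, map_add, hf, hg, pComp_add, map_add]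
  | monomial n a =>
    have h1 : Phi α β p (monomial n a) = (AdjoinRoot.root p ^ n : AdjoinRoot p) •
        qCongr (algebraMap K (AdjoinRoot p)) α β a := by
      rw [Phi_apply, eval₂_monomial, ← QuaternionAlgebra.coe_pow,
        QuaternionAlgebra.mul_coe_eq_smul]
    rw [h1, hc, pComp_monomial, ← C_mul_X_pow_eq_monomial, map_mul, map_pow,
      AdjoinRoot.mk_C, AdjoinRoot.mk_X, mul_comm, AdjoinRoot.algebraMap_eq]

end Phi

section Inj

variable {K : Type*} [Field K] (α β : K) (p : K[X])

/-- The four component `AddMonoidHom`s of a quaternion algebra. -/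
def qRe {R : Type*} [Ring R] (a b : R) : ℍ[R,a,b] →+ R :=
  { toFun := fun q => q.re, map_zero' := rfl, map_add' := fun _ _ => rfl }

def qImI {R : Type*} [Ring R] (a b : R) : ℍ[R,a,b] →+ R :=
  { toFun := fun q => q.imI, map_zero' := rfl, map_add' := fun _ _ => rfl }

def qImJ {R : Type*} [Ring R] (a b : R) : ℍ[R,a,b] →+ R :=
  { toFun := fun q => q.imJ, map_zero' := rfl, map_add' := fun _ _ => rfl }

def qImK {R : Type*} [Ring R] (a b : R) : ℍ[R,a,b] →+ R :=
  { toFun := fun q => q.imK, map_zero' := rfl, map_add' := fun _ _ => rfl }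

theorem Phi_inj_small (f : (ℍ[K,α,β])[X]) (hdeg : f.degree < p.degree)
    (h0 : Phi α β p f = 0) : f = 0 := by
  have key : ∀ (s : ℍ[K,α,β] →+ K)
      (t : ℍ[AdjoinRoot p, algebraMap K (AdjoinRoot p) α, algebraMap K (AdjoinRoot p) β] →+
        AdjoinRoot p),
      (∀ (a : ℍ[K,α,β]) (x : AdjoinRoot p),
        t (x • qCongr (algebraMap K (AdjoinRoot p)) α β a)
          = x * algebraMap K (AdjoinRoot p) (s a)) →
      pComp s f = 0 := by
    intro s t hc
    have h1 := Phi_component α β p s t hc f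
    rw [h0, map_zero] at h1
    have h2 : p ∣ pComp s f := AdjoinRoot.mk_eq_zero.mp h1.symm
    exact eq_zero_of_dvd_of_degree_lt h2 (lt_of_le_of_lt (pComp_degree_le s f) hdeg)
  have hre := key (qRe α β) (qRe _ _) (fun a x => by
    show (x • qCongr (algebraMap K (AdjoinRoot p)) α β a).re = _
    rw [QuaternionAlgebra.re_smul, smul_eq_mul]; rfl)
  have himI := key (qImI α β) (qImI _ _) (fun a x => by
    show (x • qCongr (algebraMap K (AdjoinRoot p)) α β a).imI = _
    rw [QuaternionAlgebra.imI_smul, smul_eq_mul]; rfl)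
  have himJ := key (qImJ α β) (qImJ _ _) (fun a x => by
    show (x • qCongr (algebraMap K (AdjoinRoot p)) α β a).imJ = _
    rw [QuaternionAlgebra.imJ_smul, smul_eq_mul]; rfl)
  have himK := key (qImK α β) (qImK _ _) (fun a x => by
    show (x • qCongr (algebraMap K (AdjoinRoot p)) α β a).imK = _
    rw [QuaternionAlgebra.imK_smul, smul_eq_mul]; rfl)
  ext m <;>
    simp only [coeff_zero, QuaternionAlgebra.re_zero, QuaternionAlgebra.imI_zero,
      QuaternionAlgebra.imJ_zero, QuaternionAlgebra.imK_zero]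
  · have := congrArg (fun q => q.coeff m) hre; simpa [pComp_coeff, qRe] using this
  · have := congrArg (fun q => q.coeff m) himI; simpa [pComp_coeff, qImI] using this
  · have := congrArg (fun q => q.coeff m) himJ; simpa [pComp_coeff, qImJ] using this
  · have := congrArg (fun q => q.coeff m) himK; simpa [pComp_coeff, qImK] using this

end Inj

section Tools

variable {K : Type*} [Field K] (α β : K) (p : K[X])

theorem Phi_surjective : Function.Surjective (Phi α β p) := by
  intro u
  obtain ⟨q0, h0⟩ := AdjoinRoot.mk_surjective (g := p) u.re
  obtain ⟨q1, h1⟩ := AdjoinRoot.mk_surjective (g := p) u.imI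
  obtain ⟨q2, h2⟩ := AdjoinRoot.mk_surjective (g := p) u.imJ
  obtain ⟨q3, h3⟩ := AdjoinRoot.mk_surjective (g := p) u.imK
  refine ⟨q0.map (algebraMap K ℍ[K,α,β])
      + q1.map (algebraMap K ℍ[K,α,β]) * C ⟨0,1,0,0⟩
      + q2.map (algebraMap K ℍ[K,α,β]) * C ⟨0,0,1,0⟩
      + q3.map (algebraMap K ℍ[K,α,β]) * C ⟨0,0,0,1⟩, ?_⟩
  rw [map_add, map_add, map_add, map_mul, map_mul, map_mul,
    Phi_map_algebraMap, Phi_map_algebraMap, Phi_map_algebraMap, Phi_map_algebraMap,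
    Phi_C, Phi_C, Phi_C]
  ext <;>
    simp [QuaternionAlgebra.re_mul, QuaternionAlgebra.imI_mul, QuaternionAlgebra.imJ_mul,
      QuaternionAlgebra.imK_mul, h0, h1, h2, h3, -AdjoinRoot.algebraMap_eq]

theorem degree_P : (p.map (algebraMap K ℍ[K,α,β])).degree = p.degree :=
  degree_map_eq_of_injective (QuaternionAlgebra.algebraMap_injective) p

theorem Phi_mod (hm : p.Monic) (f : (ℍ[K,α,β])[X]) :
    Phi α β p (f %ₘ (p.map (algebraMap K ℍ[K,α,β]))) = Phi α β p f := by
  conv_rhs => rw [← modByMonic_add_div f (p.map (algebraMap K ℍ[K,α,β]))]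
  rw [map_add, map_mul, Phi_p, zero_mul, add_zero]

theorem degree_mod_lt (hp : p ≠ 0) (f : (ℍ[K,α,β])[X]) (hm : p.Monic) :
    (f %ₘ (p.map (algebraMap K ℍ[K,α,β]))).degree < p.degree := by
  rw [← degree_P α β p]
  exact degree_modByMonic_lt f (hm.map _)

theorem Phi_zero_dvd (hm : p.Monic) (f : (ℍ[K,α,β])[X]) (h : Phi α β p f = 0) :
    ∃ q, f = (p.map (algebraMap K ℍ[K,α,β])) * q := by
  have h2 : f %ₘ (p.map (algebraMap K ℍ[K,α,β])) = 0 := by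
    refine Phi_inj_small α β p _ (degree_mod_lt α β p hm.ne_zero f hm) ?_
    rw [Phi_mod α β p hm f, h]
  exact ⟨f /ₘ (p.map (algebraMap K ℍ[K,α,β])), by
    conv_lhs => rw [← modByMonic_add_div f (p.map (algebraMap K ℍ[K,α,β]))]
    rw [h2, zero_add]⟩

end Tools

theorem noZeroDivisors_of_div {R : Type*} [Ring R] (h : ∀ x : R, x ≠ 0 → IsUnit x) :
    NoZeroDivisors R :=
  ⟨fun {x y} hxy => by
    by_contra hc
    push_neg at hc
    obtain ⟨u, rfl⟩ := h x hc.1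
    exact hc.2 ((Units.mul_right_eq_zero u).mp hxy)⟩

section Key

variable {K : Type*} [Field K] (α β : K) (p : K[X])

theorem key_no_zero_divisors
    (hdiv : ∀ x : ℍ[K,α,β], x ≠ 0 → IsUnit x) (hm : p.Monic)
    (hirrP : Irreducible (p.map (algebraMap K ℍ[K,α,β]))) :
    ∀ n (f g : (ℍ[K,α,β])[X]), g.natDegree ≤ n → g.degree < p.degree →
      Phi α β p f ≠ 0 → Phi α β p g ≠ 0 → Phi α β p f * Phi α β p g = 0 → False := by
  haveI : NoZeroDivisors ℍ[K,α,β] := noZeroDivisors_of_div hdiv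
  intro n
  induction n using Nat.strong_induction_on with
  | _ n ih =>
  intro f g hgn hgdeg hf hg hfg
  have hgne : g ≠ 0 := fun h => hg (by rw [h, map_zero])
  by_cases hdeg0 : g.natDegree = 0
  · have hgC : g = C (g.coeff 0) := eq_C_of_natDegree_eq_zero hdeg0
    have hc : g.coeff 0 ≠ 0 := fun h => hgne (by rw [hgC, h, map_zero])
    have hu : IsUnit (Phi α β p g) := by
      rw [hgC, Phi_C]; exact (hdiv _ hc).map _
    exact hf ((hu.mul_left_eq_zero).mp hfg)
  · have hgd : 0 < g.natDegree := Nat.pos_of_ne_zero hdeg0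
    obtain ⟨u, hu⟩ := hdiv g.leadingCoeff (leadingCoeff_ne_zero.mpr hgne)
    set P := p.map (algebraMap K ℍ[K,α,β]) with hP
    set g' := g * C (↑u⁻¹ : ℍ[K,α,β]) with hg'
    have hlc : g.leadingCoeff * (C (↑u⁻¹ : ℍ[K,α,β])).leadingCoeff ≠ 0 := by
      rw [leadingCoeff_C, ← hu, Units.mul_inv]; exact one_ne_zero
    have hmon : g'.Monic := by
      have h2 := leadingCoeff_mul' hlc
      rw [Monic, hg', h2, leadingCoeff_C, ← hu, Units.mul_inv]
    have hdeg' : g'.degree = g.degree := by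
      rw [hg', degree_mul' hlc, degree_C (Units.ne_zero u⁻¹), add_zero]
    have hg'ne : Phi α β p g' ≠ 0 := by
      rw [hg', map_mul, Phi_C]
      intro h
      exact hg ((IsUnit.mul_left_eq_zero
        ((hdiv (↑u⁻¹ : ℍ[K,α,β]) (Units.ne_zero u⁻¹)).map _)).mp h)
    have hfg' : Phi α β p f * Phi α β p g' = 0 := by
      rw [hg', map_mul, ← mul_assoc, hfg, zero_mul]
    have hsplit : P %ₘ g' + g' * (P /ₘ g') = P := modByMonic_add_div P g'
    have hPhir : Phi α β p (P %ₘ g') = - (Phi α β p g' * Phi α β p (P /ₘ g')) := by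
      have h3 := congrArg (Phi α β p) hsplit
      rw [map_add, map_mul, Phi_p] at h3
      exact eq_neg_of_add_eq_zero_left h3
    have hrdeg : (P %ₘ g').degree < g.degree := hdeg' ▸ degree_modByMonic_lt P hmon
    by_cases hr : Phi α β p (P %ₘ g') = 0
    · have hr0 : P %ₘ g' = 0 := Phi_inj_small α β p _ (lt_trans hrdeg hgdeg) hr
      have hfac : P = g' * (P /ₘ g') := by
        conv_lhs => rw [← hsplit, hr0, zero_add]
      have hgdegpos : (0 : WithBot ℕ) < g.degree := natDegree_pos_iff_degree_pos.mp hgd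
      rcases hirrP.isUnit_or_isUnit hfac with h | h
      · have h6 := degree_eq_zero_of_isUnit h
        rw [hdeg'] at h6
        rw [h6] at hgdegpos
        exact lt_irrefl _ hgdegpos
      · have h4 := degree_eq_zero_of_isUnit h
        have h5 := congrArg degree hfac
        rw [degree_mul, h4, add_zero, hdeg'] at h5
        rw [degree_P] at h5
        exact absurd hgdeg (by rw [← h5]; exact lt_irrefl _)
    · have hfr : Phi α β p f * Phi α β p (P %ₘ g') = 0 := by
        rw [hPhir, mul_neg, ← mul_assoc, hfg', zero_mul, neg_zero]
      have hrne0 : (P %ₘ g') ≠ 0 := fun h => hr (by rw [h, map_zero])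
      have hlt : (P %ₘ g').natDegree < g.natDegree := natDegree_lt_natDegree hrne0 hrdeg
      exact ih ((P %ₘ g').natDegree) (lt_of_lt_of_le hlt hgn) f (P %ₘ g') le_rfl
        (lt_trans hrdeg hgdeg) hf hr hfr

end Key

/-- Let `A = (α,β/K)` be a division quaternion algebra over a number field `K`,
`p ∈ K[X]` a monic irreducible polynomial, and `L = K[X]/(p)`.  Then `p` remains irreducible in
`A[X]` if and only if the quaternion algebra `A ⊗ L = (α,β/L)` does not split, i.e. iff
`(α,β/L)` is a division algebra. -/
theorem central_irreducible_iff_not_split {K : Type*} [Field K] [NumberField K]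
    (α β : K) (hα : α ≠ 0) (hβ : β ≠ 0)
    (hdiv : ∀ x : ℍ[K,α,β], x ≠ 0 → IsUnit x)
    (p : K[X]) (hm : p.Monic) (hirr : Irreducible p) :
    Irreducible (p.map (algebraMap K ℍ[K,α,β])) ↔
      ∀ x : ℍ[AdjoinRoot p, algebraMap K (AdjoinRoot p) α, algebraMap K (AdjoinRoot p) β],
        x ≠ 0 → IsUnit x := by
  haveI : Fact (Irreducible p) := ⟨hirr⟩
  haveI : NoZeroDivisors ℍ[K,α,β] := noZeroDivisors_of_div hdiv
  constructor
  · intro hirrP x hx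
    have hnzd : ∀ u v : ℍ[AdjoinRoot p, algebraMap K (AdjoinRoot p) α,
        algebraMap K (AdjoinRoot p) β], u * v = 0 → u = 0 ∨ v = 0 := by
      intro u v huv
      by_contra hc
      push_neg at hc
      obtain ⟨f, hfu⟩ := Phi_surjective α β p u
      obtain ⟨g0, hgv⟩ := Phi_surjective α β p v
      have hgmod : Phi α β p (g0 %ₘ (p.map (algebraMap K ℍ[K,α,β]))) = v := by
        rw [Phi_mod α β p hm g0, hgv]
      refine key_no_zero_divisors α β p hdiv hm hirrP
        (g0 %ₘ (p.map (algebraMap K ℍ[K,α,β]))).natDegree f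
        (g0 %ₘ (p.map (algebraMap K ℍ[K,α,β]))) le_rfl
        (degree_mod_lt α β p hm.ne_zero g0 hm) ?_ ?_ ?_
      · rw [hfu]; exact hc.1
      · rw [hgmod]; exact hc.2
      · rw [hfu, hgmod, huv]
    have hinj : Function.Injective (LinearMap.mulLeft (AdjoinRoot p) x) := by
      intro a b hab
      have h1 : x * (a - b) = 0 := by
        simp only [LinearMap.mulLeft_apply] at hab
        rw [mul_sub, hab, sub_self]
      rcases hnzd _ _ h1 with h | h
      · exact absurd h hx
      · exact sub_eq_zero.mp h
    obtain ⟨y, hy⟩ := LinearMap.injective_iff_surjective.mp hinj 1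
    simp only [LinearMap.mulLeft_apply] at hy
    have hyx : y * x = 1 := by
      have h1 : x * (y * x - 1) = 0 := by
        rw [mul_sub, ← mul_assoc, hy, one_mul, mul_one, sub_self]
      rcases hnzd _ _ h1 with h | h
      · exact absurd h hx
      · rwa [sub_eq_zero] at h
    exact ⟨⟨x, y, hy, hyx⟩, rfl⟩
  · intro hB
    haveI : NoZeroDivisors ℍ[AdjoinRoot p, algebraMap K (AdjoinRoot p) α,
        algebraMap K (AdjoinRoot p) β] := noZeroDivisors_of_div hB
    constructor
    · intro hun
      have hd := degree_eq_zero_of_isUnit hun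
      rw [degree_P] at hd
      have h1 : p.natDegree = 0 := natDegree_eq_zero_iff_degree_le_zero.mpr (le_of_eq hd)
      have h2 : p = C (p.coeff 0) := eq_C_of_natDegree_eq_zero h1
      have h3 : p.coeff 0 = 1 := by
        have := hm
        rwa [Monic, leadingCoeff, h1] at this
      exact hirr.not_isUnit (by rw [h2, h3, C_1]; exact isUnit_one)
    · intro a b hab
      have h0 : Phi α β p a * Phi α β p b = 0 := by
        rw [← map_mul, ← hab, Phi_p]
      have hPne : (p.map (algebraMap K ℍ[K,α,β])) ≠ 0 := (hm.map _).ne_zero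
      have hane : a ≠ 0 := fun h => hPne (by rw [hab, h, zero_mul])
      have hbne : b ≠ 0 := fun h => hPne (by rw [hab, h, mul_zero])
      have hndP : (p.map (algebraMap K ℍ[K,α,β])).natDegree = p.natDegree :=
        natDegree_eq_of_degree_eq (degree_P α β p)
      have hdegs : a.natDegree + b.natDegree = p.natDegree := by
        rw [← hndP, hab, natDegree_mul hane hbne]
      rcases mul_eq_zero.mp h0 with h | h
      · obtain ⟨q, hq⟩ := Phi_zero_dvd α β p hm a h
        have hqne : q ≠ 0 := fun hq0 => hane (by rw [hq, hq0, mul_zero])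
        have hda : a.natDegree = p.natDegree + q.natDegree := by
          rw [hq, natDegree_mul hPne hqne, hndP]
        have hbz : b.natDegree = 0 := by omega
        have hbC : b = C (b.coeff 0) := eq_C_of_natDegree_eq_zero hbz
        have hcne : b.coeff 0 ≠ 0 := fun hcz => hbne (by rw [hbC, hcz, map_zero])
        exact Or.inr (by rw [hbC]; exact (hdiv _ hcne).map (C : ℍ[K,α,β] →+* _))
      · obtain ⟨q, hq⟩ := Phi_zero_dvd α β p hm b h
        have hqne : q ≠ 0 := fun hq0 => hbne (by rw [hq, hq0, mul_zero])
        have hdb : b.natDegree = p.natDegree + q.natDegree := by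
          rw [hq, natDegree_mul hPne hqne, hndP]
        have haz : a.natDegree = 0 := by omega
        have haC : a = C (a.coeff 0) := eq_C_of_natDegree_eq_zero haz
        have hcne : a.coeff 0 ≠ 0 := fun hcz => hane (by rw [haC, hcz, map_zero])
        exact Or.inl (by rw [haC]; exact (hdiv _ hcne).map (C : ℍ[K,α,β] →+* _))
end

section
/- Let A = (α,β/K) be a division quaternion algebra over a number field K and let p ∈ K[X] be a monic irreducible polynomial of odd degree. Then p remains irreducible in A[X]. -/
open Polynomial Quaternion

section Aux

variable {K : Type*} [Field K] {α β : K}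

/-- Coefficientwise quaternion conjugation of a polynomial. -/
noncomputable def starPoly (g : ℍ[K,α,β][X]) : ℍ[K,α,β][X] :=
  ⟨AddMonoidAlgebra.ofCoeff (g.toFinsupp.coeff.mapRange star (star_zero _))⟩

@[simp] lemma coeff_starPoly (g : ℍ[K,α,β][X]) (n : ℕ) :
    (starPoly g).coeff n = star (g.coeff n) := by
  rw [starPoly, coeff_ofFinsupp, Finsupp.mapRange_apply]; rfl

lemma support_starPoly (g : ℍ[K,α,β][X]) : (starPoly g).support = g.support := by
  ext n
  simp [Polynomial.mem_support_iff]

lemma starPoly_ne_zero {g : ℍ[K,α,β][X]} (hg : g ≠ 0) : starPoly g ≠ 0 := by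
  intro h
  apply hg
  refine Polynomial.ext fun n => ?_
  have := congrArg (fun q => Polynomial.coeff q n) h
  simp only [coeff_starPoly, Polynomial.coeff_zero, star_eq_zero] at this
  simpa using this

lemma natDegree_starPoly (g : ℍ[K,α,β][X]) : (starPoly g).natDegree = g.natDegree := by
  apply Polynomial.natDegree_eq_of_degree_eq
  show (starPoly g).support.max = g.support.max
  rw [support_starPoly]

lemma starPoly_mul (g h : ℍ[K,α,β][X]) :
    starPoly (g * h) = starPoly h * starPoly g := by
  refine Polynomial.ext fun n => ?_
  rw [coeff_starPoly, Polynomial.coeff_mul, Polynomial.coeff_mul, star_sum]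
  rw [← Finset.Nat.sum_antidiagonal_swap
      (f := fun x : ℕ × ℕ => (starPoly h).coeff x.1 * (starPoly g).coeff x.2)]
  apply Finset.sum_congr rfl
  intro x _
  simp [star_mul]

lemma star_coeff_mul_starPoly (g : ℍ[K,α,β][X]) (n : ℕ) :
    star ((g * starPoly g).coeff n) = (g * starPoly g).coeff n := by
  rw [Polynomial.coeff_mul, star_sum]
  rw [← Finset.Nat.sum_antidiagonal_swap
      (f := fun x : ℕ × ℕ => g.coeff x.1 * (starPoly g).coeff x.2)]
  apply Finset.sum_congr rfl
  intro x _
  simp [star_mul]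

lemma eq_coe_of_star_eq [CharZero K] {x : ℍ[K,α,β]} (h : star x = x) :
    x = (x.re : ℍ[K,α,β]) := by
  have key : ∀ a : K, -a = a → a = 0 := by
    intro a ha
    have h2 : (2 : K) * a = 0 := by rw [two_mul]; nth_rewrite 1 [← ha]; exact neg_add_cancel _
    exact (mul_eq_zero.mp h2).resolve_left two_ne_zero
  have hI : x.imI = 0 := key _ (congrArg QuaternionAlgebra.imI h)
  have hJ : x.imJ = 0 := key _ (congrArg QuaternionAlgebra.imJ h)
  have hK : x.imK = 0 := key _ (congrArg QuaternionAlgebra.imK h)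
  ext <;> simp [hI, hJ, hK]

/-- A polynomial with coefficients coming from `K` commutes with everything. -/
lemma commute_map_poly (H : K[X]) (g : ℍ[K,α,β][X]) :
    Commute (H.map (algebraMap K ℍ[K,α,β])) g := by
  induction H using Polynomial.induction_on' with
  | add a b ha hb =>
      rw [Polynomial.map_add]
      exact ha.add_left hb
  | monomial n a =>
      rw [Polynomial.map_monomial, ← Polynomial.C_mul_X_pow_eq_monomial]
      have hC : Commute (Polynomial.C (algebraMap K ℍ[K,α,β] a)) g := by
        show _ * _ = _ * _
        refine Polynomial.ext fun m => ?_
        rw [Polynomial.coeff_C_mul, Polynomial.coeff_mul_C]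
        exact Algebra.commutes a (g.coeff m)
      exact hC.mul_left ((Polynomial.commute_X g).pow_left n)

end Aux

/-- Let `A = (α,β/K)` be a division quaternion algebra over a number field `K`
and `p ∈ K[X]` a monic irreducible polynomial of odd degree.  Then `p` remains irreducible
in `A[X]`. -/
theorem central_odd_degree_irreducible {K : Type*} [Field K] [NumberField K]
    (α β : K) (hα : α ≠ 0) (hβ : β ≠ 0)
    (hdiv : ∀ x : ℍ[K,α,β], x ≠ 0 → IsUnit x)
    (p : K[X]) (hm : p.Monic) (hirr : Irreducible p) (hodd : Odd p.natDegree) :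
    Irreducible (p.map (algebraMap K ℍ[K,α,β])) := by
  haveI : NoZeroDivisors ℍ[K,α,β] := by
    constructor
    intro x y hxy
    by_contra hc
    push_neg at hc
    obtain ⟨hx, hy⟩ := hc
    obtain ⟨u, hu⟩ := hdiv x hx
    apply hy
    calc y = ↑u⁻¹ * (↑u * y) := (u.inv_mul_cancel_left y).symm
    _ = ↑u⁻¹ * (x * y) := by rw [hu]
    _ = 0 := by rw [hxy, mul_zero]
  set f : K →+* ℍ[K,α,β] := algebraMap K ℍ[K,α,β] with hf
  have hf_inj : Function.Injective f := f.injective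
  set q : ℍ[K,α,β][X] := p.map f with hqdef
  have hq_monic : q.Monic := hm.map f
  have hq0 : q ≠ 0 := hq_monic.ne_zero
  have hqd : q.natDegree = p.natDegree := Polynomial.natDegree_map_eq_of_injective hf_inj p
  -- p is prime in K[X]
  have hprime : Prime p := hirr.prime
  have hp0 : p ≠ 0 := hprime.ne_zero
  constructor
  · intro hu
    have h0 := Polynomial.natDegree_eq_zero_of_isUnit hu
    rw [hqd] at h0
    rw [h0] at hodd
    simp [Nat.odd_iff] at hodd
  · intro g h hgh
    by_contra hcon
    push_neg at hcon
    obtain ⟨hg, hh⟩ := hcon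
    have hgne : g ≠ 0 := by
      intro h0; rw [h0, zero_mul] at hgh; exact hq0 hgh
    have hhne : h ≠ 0 := by
      intro h0; rw [h0, mul_zero] at hgh; exact hq0 hgh
    have hg1 : 1 ≤ g.natDegree := by
      by_contra hlt
      push_neg at hlt
      have h0 : g.natDegree = 0 := Nat.lt_one_iff.mp hlt
      have hgc := Polynomial.eq_C_of_natDegree_eq_zero h0
      apply hg
      rw [hgc]
      exact (hdiv (g.coeff 0) (by
        intro hz
        apply hgne
        rw [hgc, hz, map_zero])).map Polynomial.C
    have hh1 : 1 ≤ h.natDegree := by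
      by_contra hlt
      push_neg at hlt
      have h0 : h.natDegree = 0 := Nat.lt_one_iff.mp hlt
      have hhc := Polynomial.eq_C_of_natDegree_eq_zero h0
      apply hh
      rw [hhc]
      exact (hdiv (h.coeff 0) (by
        intro hz
        apply hhne
        rw [hhc, hz, map_zero])).map Polynomial.C
    -- the "norms" g * starPoly g and h * starPoly h descend to K[X]
    have hlift : ∀ g0 : ℍ[K,α,β][X], g0 * starPoly g0 ∈ Polynomial.lifts f := by
      intro g0
      rw [Polynomial.lifts_iff_coeff_lifts]
      intro n
      refine ⟨((g0 * starPoly g0).coeff n).re, ?_⟩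
      have := eq_coe_of_star_eq (star_coeff_mul_starPoly g0 n)
      rw [hf, QuaternionAlgebra.coe_algebraMap]
      exact this.symm
    obtain ⟨G, hG⟩ := (Polynomial.mem_lifts _).mp (hlift g)
    obtain ⟨H, hH⟩ := (Polynomial.mem_lifts _).mp (hlift h)
    -- key identity : q * q = (H * G).map f
    have hstarq : starPoly q = q := by
      refine Polynomial.ext fun n => ?_
      rw [coeff_starPoly, hqdef, Polynomial.coeff_map, hf, QuaternionAlgebra.coe_algebraMap,
        QuaternionAlgebra.star_coe]
    have hkey : Polynomial.map f (H * G) = Polynomial.map f (p * p) := by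
      rw [Polynomial.map_mul, hG, hH, Polynomial.map_mul]
      have h1 : q * q = q * starPoly q := by rw [hstarq]
      have h2 : q * starPoly q = (h * starPoly h) * (g * starPoly g) := by
        rw [hgh, starPoly_mul, ← mul_assoc, mul_assoc g h (starPoly h)]
        have hcom : Commute (h * starPoly h) g := by
          rw [← hH]; exact commute_map_poly H g
        rw [← hcom.eq, mul_assoc]
      rw [← hqdef, h1, h2]
    have hHG : H * G = p * p :=
      Polynomial.map_injective f hf_inj hkey
    -- degree computations
    have hdegG : G.natDegree = 2 * g.natDegree := by
      have h1 : (Polynomial.map f G).natDegree = G.natDegree :=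
        Polynomial.natDegree_map_eq_of_injective hf_inj G
      rw [hG] at h1
      rw [← h1, Polynomial.natDegree_mul hgne (starPoly_ne_zero hgne),
        natDegree_starPoly, two_mul]
    have hdegH : H.natDegree = 2 * h.natDegree := by
      have h1 : (Polynomial.map f H).natDegree = H.natDegree :=
        Polynomial.natDegree_map_eq_of_injective hf_inj H
      rw [hH] at h1
      rw [← h1, Polynomial.natDegree_mul hhne (starPoly_ne_zero hhne),
        natDegree_starPoly, two_mul]
    have hGne : G ≠ 0 := by
      intro h0
      rw [h0, mul_zero] at hHG
      exact hp0 (mul_self_eq_zero.mp hHG.symm)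
    have hHne : H ≠ 0 := by
      intro h0
      rw [h0, zero_mul] at hHG
      exact hp0 (mul_self_eq_zero.mp hHG.symm)
    have hGnu : ¬ IsUnit G := by
      intro hu
      have := Polynomial.natDegree_eq_zero_of_isUnit hu
      omega
    have hHnu : ¬ IsUnit H := by
      intro hu
      have := Polynomial.natDegree_eq_zero_of_isUnit hu
      omega
    -- p divides H * G = p * p, so p divides H or G
    have hpd : p ∣ H * G := by rw [hHG]; exact Dvd.intro p rfl
    rcases hprime.2.2 H G hpd with hd | hd
    · obtain ⟨H1, hH1⟩ := hd
      have hH1G : H1 * G = p := by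
        apply mul_left_cancel₀ hp0
        rw [← hHG, hH1]; ring
      rcases hirr.isUnit_or_isUnit hH1G.symm with hu | hu
      · -- H1 unit, so natDegree p = natDegree G = 2 * natDegree g
        have h1 := Polynomial.natDegree_eq_zero_of_isUnit hu
        have h2 : p.natDegree = H1.natDegree + G.natDegree := by
          rw [← hH1G]
          exact Polynomial.natDegree_mul (fun h0 => by
            rw [h0, zero_mul] at hH1G; exact hp0 hH1G.symm) hGne
        rw [Nat.odd_iff] at hodd
        omega
      · exact hGnu hu
    · obtain ⟨G1, hG1⟩ := hd
      have hG1H : G1 * H = p := by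
        apply mul_left_cancel₀ hp0
        rw [← hHG, hG1]; ring
      rcases hirr.isUnit_or_isUnit hG1H.symm with hu | hu
      · have h1 := Polynomial.natDegree_eq_zero_of_isUnit hu
        have h2 : p.natDegree = G1.natDegree + H.natDegree := by
          rw [← hG1H]
          exact Polynomial.natDegree_mul (fun h0 => by
            rw [h0, zero_mul] at hG1H; exact hp0 hG1H.symm) hHne
        rw [Nat.odd_iff] at hodd
        omega
      · exact hHnu hu
end

section
/- Let A = (α,β/K) be a division quaternion algebra over a number field K and let 𝔭 ∈ A[X] be a non-constant monic polynomial that is not divisible by any non-constant polynomial with coefficients in K (i.e., its maximal central factor is trivial). Then 𝔭 is irreducible in A[X] if and only if its norm N(𝔭) = 𝔭·𝔭̄ is irreducible in K[X]. -/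
open Polynomial Quaternion

/-- Coefficientwise conjugation of a quaternionic polynomial: if `𝔭 = Σ aᵢ Xⁱ`
then `conjPoly 𝔭 = Σ āᵢ Xⁱ`. -/
noncomputable def conjPoly {K : Type*} [Field K] {α β : K}
    (p : Polynomial ℍ[K,α,β]) : Polynomial ℍ[K,α,β] :=
  p.sum fun n a => Polynomial.C (star a) * Polynomial.X ^ n

namespace QPoly

variable {K : Type*} [Field K] {α β : K}

theorem conjPoly_coeff (p : Polynomial ℍ[K,α,β]) (m : ℕ) :
    (conjPoly p).coeff m = star (p.coeff m) := by
  classical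
  simp only [conjPoly, Polynomial.sum, finset_sum_coeff, coeff_C_mul, coeff_X_pow,
    mul_ite, mul_one, mul_zero]
  rw [Finset.sum_ite_eq p.support m (fun i => star (p.coeff i))]
  split_ifs with h
  · rfl
  · rw [Polynomial.notMem_support_iff.mp h, star_zero]

theorem conjPoly_mul (p q : Polynomial ℍ[K,α,β]) :
    conjPoly (p * q) = conjPoly q * conjPoly p := by
  refine Polynomial.ext fun m => ?_
  rw [conjPoly_coeff, coeff_mul, coeff_mul]
  rw [← Finset.Nat.sum_antidiagonal_swap
    (f := fun x : ℕ × ℕ => (conjPoly q).coeff x.1 * (conjPoly p).coeff x.2)]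
  rw [star_sum]
  refine Finset.sum_congr rfl fun x hx => ?_
  simp [conjPoly_coeff, star_mul]

theorem conjPoly_conjPoly (p : Polynomial ℍ[K,α,β]) : conjPoly (conjPoly p) = p :=
  Polynomial.ext fun m => by simp [conjPoly_coeff]

@[simp] theorem conjPoly_zero : conjPoly (0 : Polynomial ℍ[K,α,β]) = 0 :=
  Polynomial.ext fun m => by simp [conjPoly_coeff]

theorem conjPoly_eq_zero {p : Polynomial ℍ[K,α,β]} : conjPoly p = 0 ↔ p = 0 := by
  constructor
  · intro h
    refine Polynomial.ext fun m => ?_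
    have := congrArg (fun q => Polynomial.coeff q m) h
    simp only [conjPoly_coeff, coeff_zero] at this ⊢
    simpa using congrArg star this
  · rintro rfl; exact conjPoly_zero

theorem conjPoly_map (f : K[X]) :
    conjPoly (f.map (algebraMap K ℍ[K,α,β])) = f.map (algebraMap K ℍ[K,α,β]) :=
  Polynomial.ext fun m => by
    simp [conjPoly_coeff, coeff_map, QuaternionAlgebra.coe_algebraMap]

theorem degree_conjPoly_le (p : Polynomial ℍ[K,α,β]) : (conjPoly p).degree ≤ p.degree := by
  refine Polynomial.degree_le_iff_coeff_zero _ _ |>.mpr fun m hm => ?_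
  rw [conjPoly_coeff, Polynomial.coeff_eq_zero_of_degree_lt hm, star_zero]

theorem degree_conjPoly (p : Polynomial ℍ[K,α,β]) : (conjPoly p).degree = p.degree := by
  refine le_antisymm (degree_conjPoly_le p) ?_
  conv_lhs => rw [← conjPoly_conjPoly p]
  exact degree_conjPoly_le _

theorem natDegree_conjPoly (p : Polynomial ℍ[K,α,β]) :
    (conjPoly p).natDegree = p.natDegree := by
  unfold Polynomial.natDegree
  rw [degree_conjPoly]

theorem commute_C_poly {a : ℍ[K,α,β]} (h : ∀ b : ℍ[K,α,β], Commute a b)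
    (q : Polynomial ℍ[K,α,β]) : Commute (C a) q := by
  induction q using Polynomial.induction_on with
  | C b => exact (h b).map (C : _ →+* Polynomial ℍ[K,α,β])
  | add p1 p2 h1 h2 => exact h1.add_right h2
  | monomial n b ih =>
      exact Commute.mul_right ((h b).map (C : _ →+* Polynomial ℍ[K,α,β]))
        ((Polynomial.commute_X (C a)).symm.pow_right (n + 1))

/-- A polynomial with scalar coefficients is central in `A[X]`. -/
theorem map_comm (f : K[X]) (q : Polynomial ℍ[K,α,β]) :
    f.map (algebraMap K ℍ[K,α,β]) * q = q * f.map (algebraMap K ℍ[K,α,β]) := by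
  have : Commute (f.map (algebraMap K ℍ[K,α,β])) q := by
    induction f using Polynomial.induction_on with
    | C a =>
        rw [Polynomial.map_C]
        exact commute_C_poly
          (fun b => show Commute ((algebraMap K ℍ[K,α,β]) a) b from Algebra.commutes a b) q
    | add p1 p2 h1 h2 => rw [Polynomial.map_add]; exact h1.add_left h2
    | monomial m a h =>
        rw [Polynomial.map_mul, Polynomial.map_C, Polynomial.map_pow, Polynomial.map_X]
        exact Commute.mul_left (commute_C_poly
          (fun b => show Commute ((algebraMap K ℍ[K,α,β]) a) b from Algebra.commutes a b) q)
          ((Polynomial.commute_X q).pow_left (m + 1))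
  exact this

theorem nzd (hdiv : ∀ x : ℍ[K,α,β], x ≠ 0 → IsUnit x) : NoZeroDivisors ℍ[K,α,β] := by
  constructor
  intro a b h
  by_contra hc
  push_neg at hc
  obtain ⟨u, hu⟩ := hdiv a hc.1
  have : b = 0 := by
    have := congrArg (fun x => (↑u⁻¹ : ℍ[K,α,β]) * x) h
    simpa [← hu, ← mul_assoc] using this
  exact hc.2 this

/-- A star-fixed quaternionic polynomial descends to `K[X]`. -/
theorem exists_lift [CharZero K] {p : Polynomial ℍ[K,α,β]} (hp : conjPoly p = p) :
    ∃ f : K[X], f.map (algebraMap K ℍ[K,α,β]) = p := by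
  classical
  refine ⟨p.sum fun n a => C a.re * X ^ n, ?_⟩
  have hco : ∀ m, (p.sum fun n (a : ℍ[K,α,β]) => C a.re * X ^ n).coeff m = (p.coeff m).re := by
    intro m
    simp only [Polynomial.sum, finset_sum_coeff, coeff_C_mul, coeff_X_pow,
      mul_ite, mul_one, mul_zero]
    rw [Finset.sum_ite_eq p.support m (fun i => (p.coeff i).re)]
    split_ifs with h
    · rfl
    · rw [Polynomial.notMem_support_iff.mp h]; rfl
  refine Polynomial.ext fun m => ?_
  rw [coeff_map, hco, QuaternionAlgebra.coe_algebraMap]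
  have hst : star (p.coeff m) = p.coeff m := by
    have := congrArg (fun q => Polynomial.coeff q m) hp
    simpa [conjPoly_coeff] using this
  exact (QuaternionAlgebra.star_eq_self.mp hst).symm

theorem norm_comm [CharZero K] (hdiv : ∀ x : ℍ[K,α,β], x ≠ 0 → IsUnit x)
    (p : Polynomial ℍ[K,α,β]) : conjPoly p * p = p * conjPoly p := by
  haveI := nzd hdiv
  by_cases hp : p = 0
  · simp [hp]
  have hσ : conjPoly (p * conjPoly p) = p * conjPoly p := by
    rw [conjPoly_mul, conjPoly_conjPoly]
  obtain ⟨f, hf⟩ := exists_lift hσ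
  have hcomm := map_comm f (conjPoly p)
  rw [hf] at hcomm
  have hσp0 : conjPoly p ≠ 0 := fun h => hp (conjPoly_eq_zero.mp h)
  apply mul_right_cancel₀ hσp0
  rw [mul_assoc] at hcomm
  rw [mul_assoc, ← hcomm, ← mul_assoc]

/-- Units of `A[X]` are the nonzero constants. -/
theorem isUnit_iff (hdiv : ∀ x : ℍ[K,α,β], x ≠ 0 → IsUnit x) {p : Polynomial ℍ[K,α,β]} :
    IsUnit p ↔ ∃ a : ℍ[K,α,β], a ≠ 0 ∧ p = C a := by
  haveI := nzd hdiv
  constructor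
  · intro h
    obtain ⟨u, rfl⟩ := h
    have h1 : (↑u : Polynomial ℍ[K,α,β]) * ↑u⁻¹ = 1 := u.mul_inv
    have hu0 : (↑u : Polynomial ℍ[K,α,β]) ≠ 0 := Units.ne_zero u
    have hv0 : (↑u⁻¹ : Polynomial ℍ[K,α,β]) ≠ 0 := Units.ne_zero u⁻¹
    have hdeg : (↑u : Polynomial ℍ[K,α,β]).natDegree = 0 := by
      have := congrArg natDegree h1
      rw [Polynomial.natDegree_mul hu0 hv0, natDegree_one] at this
      omega
    obtain ⟨a, ha⟩ := Polynomial.natDegree_eq_zero.mp hdeg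
    refine ⟨a, fun h0 => hu0 ?_, ha.symm⟩
    rw [← ha, h0, map_zero]
  · rintro ⟨a, ha, rfl⟩
    exact (hdiv a ha).map (C : ℍ[K,α,β] →+* Polynomial ℍ[K,α,β])

/-- Existence of a monic greatest common left divisor of `p` and `F`, realized as
a combination in the right ideal generated by `p` and `F`. -/
theorem exists_monic_gcd (hdiv : ∀ x : ℍ[K,α,β], x ≠ 0 → IsUnit x)
    (p F : Polynomial ℍ[K,α,β]) (hp : p ≠ 0) :
    ∃ h u v : Polynomial ℍ[K,α,β], h.Monic ∧ p = h * (p /ₘ h) ∧ F = h * (F /ₘ h) ∧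
      h = p * u + F * v := by
  haveI := nzd hdiv
  classical
  set S : Polynomial ℍ[K,α,β] → Prop := fun h => h ≠ 0 ∧ ∃ u v, h = p * u + F * v with hSdef
  have hex : ∃ m, ∃ h, S h ∧ h.natDegree = m :=
    ⟨p.natDegree, p, ⟨hp, 1, 0, by simp⟩, rfl⟩
  obtain ⟨h0, hS0, hdeg0⟩ := Nat.find_spec hex
  obtain ⟨u0, v0, hbez0⟩ := hS0.2
  obtain ⟨w, hw⟩ := hdiv _ (Polynomial.leadingCoeff_ne_zero.mpr hS0.1)
  set l : ℍ[K,α,β] := ↑w⁻¹ with hl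
  have hl1 : h0.leadingCoeff * l = 1 := by rw [hl, ← hw]; exact w.mul_inv
  have hl0 : l ≠ 0 := by
    intro hz
    have h1 := hl1
    rw [hz, mul_zero] at h1
    exact (zero_ne_one (α := ℍ[K,α,β])) h1
  set h : Polynomial ℍ[K,α,β] := h0 * C l with hh
  have hmon : h.Monic := by
    rw [Polynomial.Monic, hh, leadingCoeff_mul, leadingCoeff_C, hl1]
  have hdegh : h.natDegree = Nat.find hex := by
    rw [hh, Polynomial.natDegree_mul hS0.1 (fun hc => hl0 (by
      have := congrArg (fun q => Polynomial.coeff q 0) hc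
      simpa using this)), natDegree_C, hdeg0, add_zero]
  have hbez : h = p * (u0 * C l) + F * (v0 * C l) := by
    rw [hh, hbez0, add_mul, mul_assoc, mul_assoc]
  have key : ∀ q u v, q = p * u + F * v → q = h * (q /ₘ h) := by
    intro q u v hq
    have hr := modByMonic_add_div q h
    by_cases h0r : q %ₘ h = 0
    · rw [h0r, zero_add] at hr; exact hr.symm
    · exfalso
      have hrS : S (q %ₘ h) := by
        refine ⟨h0r, u - (u0 * C l) * (q /ₘ h), v - (v0 * C l) * (q /ₘ h), ?_⟩
        rw [modByMonic_eq_sub_mul_div q h, hq, hbez]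
        noncomm_ring
      have hlt : (q %ₘ h).natDegree < Nat.find hex := by
        rw [← hdegh]
        exact natDegree_lt_natDegree h0r (degree_modByMonic_lt q hmon)
      exact Nat.find_min hex hlt ⟨_, hrS, rfl⟩
  exact ⟨h, u0 * C l, v0 * C l, hmon, key p 1 0 (by simp), key F 0 1 (by simp), hbez⟩

end QPoly

/-- Let `A = (α,β/K)` be a division quaternion algebra over a number field `K`
and `𝔭 ∈ A[X]` a non-constant monic polynomial not divisible by any non-constant polynomial
with coefficients in `K`.  Then `𝔭` is irreducible in `A[X]` if and only if its norm
`N(𝔭) = 𝔭·𝔭̄` (an element `n` of `K[X]`) is irreducible in `K[X]`. -/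
theorem irreducible_iff_norm_irreducible {K : Type*} [Field K] [NumberField K]
    (α β : K) (hα : α ≠ 0) (hβ : β ≠ 0)
    (hdiv : ∀ x : ℍ[K,α,β], x ≠ 0 → IsUnit x)
    (𝔭 : Polynomial ℍ[K,α,β]) (hm : 𝔭.Monic) (hdeg : 0 < 𝔭.degree)
    (hcf : ∀ f : K[X], 0 < f.degree →
      ¬∃ 𝔥 : Polynomial ℍ[K,α,β], 𝔭 = 𝔥 * f.map (algebraMap K ℍ[K,α,β]))
    (n : K[X]) (hn : n.map (algebraMap K ℍ[K,α,β]) = 𝔭 * conjPoly 𝔭) :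
    Irreducible 𝔭 ↔ Irreducible n := by
  haveI : NoZeroDivisors ℍ[K,α,β] := QPoly.nzd hdiv
  set φ := algebraMap K ℍ[K,α,β] with hφ
  have hφinj : Function.Injective φ := RingHom.injective φ
  have hmapinj : Function.Injective (Polynomial.map φ) := Polynomial.map_injective φ hφinj
  have hp0 : 𝔭 ≠ 0 := hm.ne_zero
  have hσp0 : conjPoly 𝔭 ≠ 0 := fun h => hp0 (QPoly.conjPoly_eq_zero.mp h)
  have hpdeg : 0 < 𝔭.natDegree := natDegree_pos_iff_degree_pos.mpr hdeg
  have hn0 : n ≠ 0 := by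
    intro h
    rw [h, Polynomial.map_zero] at hn
    exact (mul_ne_zero hp0 hσp0) hn.symm
  have hndeg : n.natDegree = 𝔭.natDegree + 𝔭.natDegree := by
    have := congrArg natDegree hn
    rwa [natDegree_map_eq_of_injective hφinj, Polynomial.natDegree_mul hp0 hσp0,
      QPoly.natDegree_conjPoly] at this
  constructor
  · -- 𝔭 irreducible → n irreducible
    intro hirr
    constructor
    · intro hu
      have := Polynomial.natDegree_eq_zero_of_isUnit hu
      omega
    · intro a b hab
      by_contra hc
      push_neg at hc
      obtain ⟨hca, hcb⟩ := hc
      have ha0 : a ≠ 0 := fun h => hn0 (by rw [hab, h, zero_mul])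
      have hb0 : b ≠ 0 := fun h => hn0 (by rw [hab, h, mul_zero])
      obtain ⟨f, hfirr, a', rfl⟩ := WfDvdMonoid.exists_irreducible_factor hca ha0
      have hf0 : f ≠ 0 := hfirr.ne_zero
      set g : K[X] := a' * b with hg
      have hng : n = f * g := by rw [hab, hg]; ring
      have hgu : ¬IsUnit g := fun h => hcb (isUnit_of_mul_isUnit_right h)
      have hg0 : g ≠ 0 := fun h => hn0 (by rw [hng, h, mul_zero])
      have hfdegpos : 0 < f.degree := Polynomial.degree_pos_of_irreducible hfirr
      set F : Polynomial ℍ[K,α,β] := f.map φ with hF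
      have hF0 : F ≠ 0 := (Polynomial.map_ne_zero_iff hφinj).mpr hf0
      obtain ⟨h, u, v, hmon, hpd, hFe, hbez⟩ := QPoly.exists_monic_gcd hdiv 𝔭 F hp0
      rcases hirr.isUnit_or_isUnit hpd with hu | hu
      · -- h is a unit, hence h = 1 and 1 = 𝔭 u + F v
        have h1 : h = 1 := hmon.eq_one_of_isUnit hu
        rw [h1] at hbez
        have key : conjPoly 𝔭 = F * ((g.map φ) * u + conjPoly 𝔭 * v) := by
          calc conjPoly 𝔭 = conjPoly 𝔭 * 1 := (mul_one _).symm
            _ = conjPoly 𝔭 * (𝔭 * u + F * v) := by rw [← hbez]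
            _ = (conjPoly 𝔭 * 𝔭) * u + (conjPoly 𝔭 * F) * v := by noncomm_ring
            _ = (𝔭 * conjPoly 𝔭) * u + (F * conjPoly 𝔭) * v := by
                rw [QPoly.norm_comm hdiv, QPoly.map_comm f]
            _ = (F * g.map φ) * u + (F * conjPoly 𝔭) * v := by
                rw [← hn, hng, Polynomial.map_mul]
            _ = F * ((g.map φ) * u + conjPoly 𝔭 * v) := by noncomm_ring
        have hfin := congrArg conjPoly key
        rw [QPoly.conjPoly_conjPoly, QPoly.conjPoly_mul, hF, QPoly.conjPoly_map] at hfin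
        exact hcf f hfdegpos ⟨_, hfin⟩
      · -- the cofactor is a unit, hence F = 𝔭 * w
        obtain ⟨c, hc0, hcC⟩ := (QPoly.isUnit_iff hdiv).mp hu
        obtain ⟨wc, hwc⟩ := hdiv c hc0
        set l : ℍ[K,α,β] := ↑wc⁻¹ with hldef
        have hl1 : c * l = 1 := by rw [hldef, ← hwc]; exact wc.mul_inv
        have hh : h = 𝔭 * C l := by
          rw [hpd, hcC, mul_assoc, ← map_mul, hl1, map_one, mul_one]
        set w : Polynomial ℍ[K,α,β] := C l * (F /ₘ h) with hwdef
        have hFw : F = 𝔭 * w := by rw [hwdef, ← mul_assoc, ← hh, ← hFe]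
        have hw0 : w ≠ 0 := fun hzz => hF0 (by rw [hFw, hzz, mul_zero])
        have hσw0 : conjPoly w ≠ 0 := fun hzz => hw0 (QPoly.conjPoly_eq_zero.mp hzz)
        have hFsw : F = conjPoly w * conjPoly 𝔭 := by
          conv_lhs => rw [hF, ← QPoly.conjPoly_map f, ← hF, hFw, QPoly.conjPoly_mul]
        have hsw : conjPoly (w * conjPoly w) = w * conjPoly w := by
          rw [QPoly.conjPoly_mul, QPoly.conjPoly_conjPoly]
        obtain ⟨ν, hν⟩ := QPoly.exists_lift hsw
        have hFF : ((f * f : K[X])).map φ = (ν * n).map φ := by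
          rw [Polynomial.map_mul, Polynomial.map_mul, hν, hn, ← hF]
          calc F * F = (𝔭 * w) * (conjPoly w * conjPoly 𝔭) := by rw [← hFw, ← hFsw]
            _ = 𝔭 * (w * conjPoly w) * conjPoly 𝔭 := by noncomm_ring
            _ = (w * conjPoly w) * 𝔭 * conjPoly 𝔭 := by rw [← hν, QPoly.map_comm ν 𝔭]
            _ = w * conjPoly w * (𝔭 * conjPoly 𝔭) := by noncomm_ring
        have hff : f * f = ν * n := hmapinj hFF
        have hf_eq : f = ν * g := by
          have : f * f = f * (ν * g) := by rw [hff, hng]; ring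
          exact mul_left_cancel₀ hf0 this
        rcases hfirr.isUnit_or_isUnit hf_eq with hν_u | hg_u
        · -- ν is a unit, so w is a nonzero constant
          have hνdeg : ν.natDegree = 0 := Polynomial.natDegree_eq_zero_of_isUnit hν_u
          have hwσdeg : (w * conjPoly w).natDegree = 0 := by
            have := congrArg natDegree hν
            rw [natDegree_map_eq_of_injective hφinj, hνdeg] at this
            omega
          have hwdeg : w.natDegree = 0 := by
            rw [Polynomial.natDegree_mul hw0 hσw0, QPoly.natDegree_conjPoly] at hwσdeg
            omega
          obtain ⟨c0, hc0C⟩ := Polynomial.natDegree_eq_zero.mp hwdeg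
          have hc00 : c0 ≠ 0 := fun hz => hw0 (by rw [← hc0C, hz, map_zero])
          have hlcf : f.leadingCoeff ≠ 0 := Polynomial.leadingCoeff_ne_zero.mpr hf0
          have hlead : φ f.leadingCoeff = c0 := by
            have h1 : F.leadingCoeff = φ f.leadingCoeff := leadingCoeff_map_of_injective hφinj f
            have h2 : F.leadingCoeff = c0 := by
              rw [hFw, ← hc0C, leadingCoeff_mul, leadingCoeff_C, hm.leadingCoeff, one_mul]
            rw [← h1, h2]
          have hfin : 𝔭 = 1 * ((f * C (f.leadingCoeff)⁻¹).map φ) := by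
            rw [one_mul, Polynomial.map_mul, Polynomial.map_C, ← hF]
            have : F * C (φ (f.leadingCoeff)⁻¹) = 𝔭 := by
              rw [hFw, ← hc0C, ← hlead, mul_assoc, ← map_mul, ← map_mul,
                mul_inv_cancel₀ hlcf, map_one, map_one, mul_one]
            rw [← this]
          refine hcf (f * C (f.leadingCoeff)⁻¹) ?_ ⟨1, hfin⟩
          rwa [Polynomial.degree_mul, Polynomial.degree_C (inv_ne_zero hlcf), add_zero]
        · exact hgu hg_u
  · -- n irreducible → 𝔭 irreducible
    intro hirr
    constructor
    · intro hu
      obtain ⟨c, hc0, hcC⟩ := (QPoly.isUnit_iff hdiv).mp hu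
      rw [hcC] at hdeg
      simp [Polynomial.degree_C hc0] at hdeg
    · intro a b hab
      have ha0 : a ≠ 0 := fun h => hp0 (by rw [hab, h, zero_mul])
      have hb0 : b ≠ 0 := fun h => hp0 (by rw [hab, h, mul_zero])
      have hσa0 : conjPoly a ≠ 0 := fun h => ha0 (QPoly.conjPoly_eq_zero.mp h)
      have hσb0 : conjPoly b ≠ 0 := fun h => hb0 (QPoly.conjPoly_eq_zero.mp h)
      obtain ⟨na, hna⟩ := QPoly.exists_lift
        (by rw [QPoly.conjPoly_mul, QPoly.conjPoly_conjPoly] :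
          conjPoly (a * conjPoly a) = a * conjPoly a)
      obtain ⟨nb, hnb⟩ := QPoly.exists_lift
        (by rw [QPoly.conjPoly_mul, QPoly.conjPoly_conjPoly] :
          conjPoly (b * conjPoly b) = b * conjPoly b)
      have hnab : n = nb * na := by
        apply hmapinj
        rw [hn, hab, Polynomial.map_mul, hna, hnb, QPoly.conjPoly_mul]
        calc a * b * (conjPoly b * conjPoly a)
            = a * (b * conjPoly b) * conjPoly a := by noncomm_ring
          _ = (b * conjPoly b) * a * conjPoly a := by rw [← hnb, QPoly.map_comm nb a]
          _ = b * conjPoly b * (a * conjPoly a) := by noncomm_ring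
      have hdegnorm : ∀ (q : Polynomial ℍ[K,α,β]) (nq : K[X]),
          q ≠ 0 → nq.map φ = q * conjPoly q → nq.natDegree = q.natDegree + q.natDegree := by
        intro q nq hq hnq
        have hσq0 : conjPoly q ≠ 0 := fun h => hq (QPoly.conjPoly_eq_zero.mp h)
        have := congrArg natDegree hnq
        rwa [natDegree_map_eq_of_injective hφinj, Polynomial.natDegree_mul hq hσq0,
          QPoly.natDegree_conjPoly] at this
      have hunit : ∀ (q : Polynomial ℍ[K,α,β]) (nq : K[X]), q ≠ 0 →
          nq.map φ = q * conjPoly q → IsUnit nq → IsUnit q := by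
        intro q nq hq hnq hu
        have h1 := hdegnorm q nq hq hnq
        have h2 := Polynomial.natDegree_eq_zero_of_isUnit hu
        have h3 : q.natDegree = 0 := by omega
        obtain ⟨cq, hcq⟩ := Polynomial.natDegree_eq_zero.mp h3
        refine (QPoly.isUnit_iff hdiv).mpr ⟨cq, ?_, hcq.symm⟩
        intro hz
        exact hq (by rw [← hcq, hz, map_zero])
      rcases hirr.isUnit_or_isUnit hnab with hu | hu
      · exact Or.inr (hunit b nb hb0 hnb hu)
      · exact Or.inl (hunit a na ha0 hna hu)
end

section
/- Let A = (α,β/K) be a division quaternion algebra over a field K and let p ∈ K[X] be a monic irreducible polynomial of degree greater than 1. Suppose there is a quaternion 𝔞 ∈ A with 𝔞 ∉ K and 𝔞² = d ∈ K, and polynomials q₀, q₁ ∈ K[X] with p = q₀² − d·q₁². Then p has a non-trivial factorization in A[X]: p = (q₀ + q₁·𝔞)·(q₀ − q₁·𝔞), where both factors are non-constant polynomials of degree strictly less than deg p. -/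
open Polynomial Quaternion

/-- Let `A = (α,β/K)` be a division quaternion algebra over a field `K` and
`p ∈ K[X]` monic irreducible of degree `> 1`.  Suppose `𝔞 ∈ A ∖ K` satisfies `𝔞² = d ∈ K`, and
`p = q₀² − d·q₁²` with `q₀, q₁ ∈ K[X]`.  Then `p = (q₀ + q₁·𝔞)·(q₀ − q₁·𝔞)` is a non-trivial
factorization in `A[X]`: both factors are non-constant of degree strictly less than `deg p`. -/
theorem central_factorization_via_subfield {K : Type*} [Field K]
    (α β : K) (hα : α ≠ 0) (hβ : β ≠ 0)
    (hdiv : ∀ x : ℍ[K,α,β], x ≠ 0 → IsUnit x)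
    (d : K) (p : K[X]) (hm : p.Monic) (hirr : Irreducible p) (hdeg : 1 < p.degree)
    (𝔞 : ℍ[K,α,β]) (ha : 𝔞 ∉ Set.range (algebraMap K ℍ[K,α,β]))
    (ha2 : 𝔞 ^ 2 = algebraMap K ℍ[K,α,β] d)
    (q₀ q₁ : K[X]) (h : p = q₀ ^ 2 - Polynomial.C d * q₁ ^ 2) :
    p.map (algebraMap K ℍ[K,α,β]) =
        (q₀.map (algebraMap K ℍ[K,α,β]) + q₁.map (algebraMap K ℍ[K,α,β]) * Polynomial.C 𝔞) *
        (q₀.map (algebraMap K ℍ[K,α,β]) - q₁.map (algebraMap K ℍ[K,α,β]) * Polynomial.C 𝔞) ∧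
      0 < (q₀.map (algebraMap K ℍ[K,α,β]) + q₁.map (algebraMap K ℍ[K,α,β]) *
            Polynomial.C 𝔞).degree ∧
      (q₀.map (algebraMap K ℍ[K,α,β]) + q₁.map (algebraMap K ℍ[K,α,β]) *
            Polynomial.C 𝔞).degree < p.degree ∧
      0 < (q₀.map (algebraMap K ℍ[K,α,β]) - q₁.map (algebraMap K ℍ[K,α,β]) *
            Polynomial.C 𝔞).degree ∧
      (q₀.map (algebraMap K ℍ[K,α,β]) - q₁.map (algebraMap K ℍ[K,α,β]) *
            Polynomial.C 𝔞).degree < p.degree := by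

  set F := algebraMap K ℍ[K,α,β] with hFdef
  haveI : NoZeroDivisors ℍ[K,α,β] := by
    constructor
    intro a b hab
    by_cases ha0 : a = 0
    · exact Or.inl ha0
    · right
      obtain ⟨w, hw⟩ := hdiv a ha0
      have hb : b = ↑w⁻¹ * (a * b) := by
        rw [← hw, ← mul_assoc, Units.inv_mul, one_mul]
      rw [hab, mul_zero] at hb
      exact hb
  have hFinj : Function.Injective F := (algebraMap K ℍ[K,α,β]).injective
  -- independence of 1 and 𝔞 over K
  have hind : ∀ a b : K, F a + F b * 𝔞 = 0 → a = 0 ∧ b = 0 := by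
    intro a b hab
    by_cases hb : b = 0
    · subst hb
      simp only [map_zero, zero_mul, add_zero] at hab
      exact ⟨hFinj (by simpa using hab), rfl⟩
    · exfalso
      apply ha
      refine ⟨b⁻¹ * -a, ?_⟩
      have h1 : F b * 𝔞 = -F a := eq_neg_of_add_eq_zero_right hab
      have h2 : F (b⁻¹) * (F b * 𝔞) = F b⁻¹ * -F a := by rw [h1]
      rw [← mul_assoc, ← map_mul, inv_mul_cancel₀ hb, map_one, one_mul] at h2
      rw [map_mul, map_neg, h2]
  set f := q₀.map F with hf
  set g := q₁.map F with hg
  have hcomm : ∀ q : K[X], (q.map F) * C 𝔞 = C 𝔞 * (q.map F) := by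
    intro q
    apply Polynomial.ext
    intro n
    rw [coeff_mul_C, coeff_C_mul, coeff_map]
    exact Algebra.commutes _ _
  have hfg : Commute f g := by
    show f * g = g * f
    rw [hf, hg, ← Polynomial.map_mul, ← Polynomial.map_mul, mul_comm]
  have hfc : Commute f (C 𝔞) := hcomm q₀
  have hgc : Commute g (C 𝔞) := hcomm q₁
  set u := f + g * C 𝔞 with hu
  set v := f - g * C 𝔞 with hv
  have hprod : u * v = p.map F := by
    have h1 : u * v = f * f - (g * C 𝔞) * (g * C 𝔞) :=
      ((hfg.mul_right hfc).mul_self_sub_mul_self_eq).symm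
    have ha2' : 𝔞 * 𝔞 = F d := by rw [← pow_two, ha2]
    rw [h1, hgc.symm.mul_mul_mul_comm, ← C_mul, ha2', hf, hg,
      ← Polynomial.map_C F, ← Polynomial.map_mul, ← Polynomial.map_mul, ← Polynomial.map_mul,
      ← Polynomial.map_sub]
    congr 1
    rw [h]
    ring
  have hp0 : p ≠ 0 := hm.ne_zero
  have hpm : p.map F ≠ 0 := (Polynomial.map_ne_zero_iff hFinj).mpr hp0
  have huv : u * v ≠ 0 := by rw [hprod]; exact hpm
  have hu0 : u ≠ 0 := left_ne_zero_of_mul huv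
  have hv0 : v ≠ 0 := right_ne_zero_of_mul huv
  have hnc : ¬ (q₀.degree ≤ 0 ∧ q₁.degree ≤ 0) := by
    rintro ⟨h0, h1⟩
    rw [Polynomial.eq_C_of_degree_le_zero h0, Polynomial.eq_C_of_degree_le_zero h1,
      ← C_pow, ← C_pow, ← C_mul, ← C_sub] at h
    rw [h] at hdeg
    exact absurd (hdeg.trans_le degree_C_le) (by norm_num)
  have coeff_u : ∀ n, u.coeff n = F (q₀.coeff n) + F (q₁.coeff n) * 𝔞 := by
    intro n
    simp [hu, hf, hg, Polynomial.coeff_add, Polynomial.coeff_mul_C, Polynomial.coeff_map]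
  have coeff_v : ∀ n, v.coeff n = F (q₀.coeff n) + F (-(q₁.coeff n)) * 𝔞 := by
    intro n
    simp [hv, hf, hg, Polynomial.coeff_sub, Polynomial.coeff_mul_C, Polynomial.coeff_map,
      sub_eq_add_neg]
  have hposu : 0 < u.degree := by
    by_contra h'
    push_neg at h'
    apply hnc
    constructor
    · rw [Polynomial.degree_le_iff_coeff_zero]
      intro m hm
      have hc := Polynomial.coeff_eq_zero_of_degree_lt (h'.trans_lt hm)
      rw [coeff_u m] at hc
      exact (hind _ _ hc).1
    · rw [Polynomial.degree_le_iff_coeff_zero]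
      intro m hm
      have hc := Polynomial.coeff_eq_zero_of_degree_lt (h'.trans_lt hm)
      rw [coeff_u m] at hc
      exact (hind _ _ hc).2
  have hposv : 0 < v.degree := by
    by_contra h'
    push_neg at h'
    apply hnc
    constructor
    · rw [Polynomial.degree_le_iff_coeff_zero]
      intro m hm
      have hc := Polynomial.coeff_eq_zero_of_degree_lt (h'.trans_lt hm)
      rw [coeff_v m] at hc
      exact (hind _ _ hc).1
    · rw [Polynomial.degree_le_iff_coeff_zero]
      intro m hm
      have hc := Polynomial.coeff_eq_zero_of_degree_lt (h'.trans_lt hm)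
      rw [coeff_v m] at hc
      exact neg_eq_zero.mp (hind _ _ hc).2
  have hnat : u.natDegree + v.natDegree = p.natDegree := by
    have h2 := Polynomial.natDegree_mul hu0 hv0
    rw [hprod, Polynomial.natDegree_map_eq_of_injective hFinj] at h2
    exact h2.symm
  have hupos : 0 < u.natDegree := Polynomial.natDegree_pos_iff_degree_pos.mpr hposu
  have hvpos : 0 < v.natDegree := Polynomial.natDegree_pos_iff_degree_pos.mpr hposv
  have hdmap : (p.map F).degree = p.degree :=
    Polynomial.degree_map_eq_of_injective hFinj p
  have hnmap : (p.map F).natDegree = p.natDegree :=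
    Polynomial.natDegree_map_eq_of_injective hFinj p
  have hup : u.degree < p.degree := by
    rw [← hdmap]
    exact Polynomial.degree_lt_degree (p := u) (q := p.map F) (by omega)
  have hvp : v.degree < p.degree := by
    rw [← hdmap]
    exact Polynomial.degree_lt_degree (p := v) (q := p.map F) (by omega)
  exact ⟨hprod.symm, hposu, hup, hposv, hvp⟩
end

section
/- Let A = (α,β/K) be a quaternion algebra over a field K, let p, q ∈ K[X] and 𝔭 ∈ A[X], and let 𝔯 ∈ A[X] be a remainder of 𝔭 modulo q, i.e., 𝔭 = 𝔮·q + 𝔯 for some 𝔮 ∈ A[X]. If p·q = 𝔭·𝔭̄, then q divides 𝔯·𝔯̄ and q divides 𝔭·𝔯̄ in A[X]. -/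
open Polynomial Quaternion

lemma coeff_conjPoly {K : Type*} [Field K] {α β : K} (p : Polynomial ℍ[K,α,β]) (n : ℕ) :
    (conjPoly p).coeff n = star (p.coeff n) := by
  rw [conjPoly, Polynomial.coeff_sum]
  simp only [Polynomial.coeff_C_mul, Polynomial.coeff_X_pow, mul_ite, mul_one, mul_zero]
  rw [Polynomial.sum, Finset.sum_ite_eq p.support n (fun i => star (p.coeff i))]
  by_cases h : n ∈ p.support
  · simp [h]
  · simp [h, Polynomial.notMem_support_iff.mp h]

lemma conjPoly_add {K : Type*} [Field K] {α β : K} (a b : Polynomial ℍ[K,α,β]) :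
    conjPoly (a + b) = conjPoly a + conjPoly b :=
  Polynomial.ext fun n => by simp [coeff_conjPoly]

lemma conjPoly_mul {K : Type*} [Field K] {α β : K} (a b : Polynomial ℍ[K,α,β]) :
    conjPoly (a * b) = conjPoly b * conjPoly a := by
  refine Polynomial.ext fun n => ?_
  rw [coeff_conjPoly, Polynomial.coeff_mul, Polynomial.coeff_mul, star_sum]
  conv_lhs => rw [← Finset.HasAntidiagonal.map_swap_antidiagonal, Finset.sum_map]
  refine Finset.sum_congr rfl fun x _ => ?_
  simp [coeff_conjPoly, star_mul]

lemma conjPoly_map {K : Type*} [Field K] {α β : K} (q : K[X]) :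
    conjPoly (q.map (algebraMap K ℍ[K,α,β])) = q.map (algebraMap K ℍ[K,α,β]) :=
  Polynomial.ext fun n => by
    simp [coeff_conjPoly, Polynomial.coeff_map, QuaternionAlgebra.coe_algebraMap,
      QuaternionAlgebra.star_coe]

lemma map_comm {K : Type*} [Field K] {α β : K} (q : K[X]) (g : Polynomial ℍ[K,α,β]) :
    q.map (algebraMap K ℍ[K,α,β]) * g = g * q.map (algebraMap K ℍ[K,α,β]) := by
  refine Polynomial.ext fun n => ?_
  rw [Polynomial.coeff_mul, Polynomial.coeff_mul]
  conv_lhs => rw [← Finset.HasAntidiagonal.map_swap_antidiagonal, Finset.sum_map]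
  refine Finset.sum_congr rfl fun x _ => ?_
  simp only [Function.Embedding.coeFn_mk, Prod.fst_swap, Prod.snd_swap, Polynomial.coeff_map,
    Equiv.coe_toEmbedding, Equiv.coe_prodComm]
  exact Algebra.commutes (q.coeff x.2) (g.coeff x.1)

/-- Let `A = (α,β/K)` be a quaternion algebra over a field `K`,
`p, q ∈ K[X]`, `𝔭 ∈ A[X]`, and let `𝔯` be a remainder of `𝔭` modulo `q`, i.e.
`𝔭 = 𝔮·q + 𝔯`.  If `p·q = 𝔭·𝔭̄`, then `q` divides `𝔯·𝔯̄` and `q` divides `𝔭·𝔯̄` in `A[X]`. -/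
theorem central_dvd_remainder_norms {K : Type*} [Field K] (α β : K)
    (p q : K[X]) (𝔭 𝔮 𝔯 : Polynomial ℍ[K,α,β])
    (hrem : 𝔭 = 𝔮 * q.map (algebraMap K ℍ[K,α,β]) + 𝔯)
    (hnorm : (p * q).map (algebraMap K ℍ[K,α,β]) = 𝔭 * conjPoly 𝔭) :
    (∃ 𝔥 : Polynomial ℍ[K,α,β], 𝔯 * conjPoly 𝔯 = 𝔥 * q.map (algebraMap K ℍ[K,α,β])) ∧
    (∃ 𝔥 : Polynomial ℍ[K,α,β], 𝔭 * conjPoly 𝔯 = 𝔥 * q.map (algebraMap K ℍ[K,α,β])) := by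
  set Q := q.map (algebraMap K ℍ[K,α,β]) with hQ
  set P := p.map (algebraMap K ℍ[K,α,β]) with hP
  have hconj : conjPoly 𝔭 = Q * conjPoly 𝔮 + conjPoly 𝔯 := by
    rw [hrem, conjPoly_add, conjPoly_mul, conjPoly_map]
  have h2 : (p * q).map (algebraMap K ℍ[K,α,β]) = P * Q := by
    rw [Polynomial.map_mul]
  have h1 : P * Q = 𝔭 * conjPoly 𝔮 * Q + 𝔭 * conjPoly 𝔯 := by
    rw [← h2, hnorm, hconj, mul_add, ← mul_assoc, mul_assoc 𝔭 Q (conjPoly 𝔮),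
      map_comm q (conjPoly 𝔮), ← mul_assoc]
  have key : 𝔭 * conjPoly 𝔯 = (P - 𝔭 * conjPoly 𝔮) * Q := by
    rw [sub_mul]
    exact eq_sub_of_add_eq' h1.symm
  refine ⟨⟨P - 𝔭 * conjPoly 𝔮 - 𝔮 * conjPoly 𝔯, ?_⟩, ⟨P - 𝔭 * conjPoly 𝔮, key⟩⟩
  have hr : 𝔯 = 𝔭 - 𝔮 * Q := by rw [hrem]; rw [add_sub_cancel_left]
  calc 𝔯 * conjPoly 𝔯 = 𝔭 * conjPoly 𝔯 - 𝔮 * Q * conjPoly 𝔯 := by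
        rw [hr, sub_mul]
    _ = (P - 𝔭 * conjPoly 𝔮) * Q - (𝔮 * conjPoly 𝔯) * Q := by
        rw [key, mul_assoc, map_comm q (conjPoly 𝔯), ← mul_assoc]
    _ = (P - 𝔭 * conjPoly 𝔮 - 𝔮 * conjPoly 𝔯) * Q := by simp [sub_mul]
end

section
/- Let A = (α,β/K) be a quaternion algebra over a field K, let p, q ∈ K[X] with q ≠ 0 and 𝔭 ∈ A[X] with p·q = 𝔭·𝔭̄, and let 𝔯 ∈ A[X] satisfy 𝔭 = 𝔰·q + 𝔯 for some 𝔰 ∈ A[X]. If 𝔮 ∈ A[X] is the polynomial with 𝔮·q = 𝔭·𝔯̄ (which exists since q divides 𝔭·𝔯̄), then p divides 𝔮·𝔮̄ in A[X]. -/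
open Polynomial Quaternion

namespace ConjAux

lemma sum_antidiagonal_swap {M : Type*} [AddCommMonoid M] (n : ℕ) (f : ℕ × ℕ → M) :
    ∑ x ∈ Finset.HasAntidiagonal.antidiagonal n, f x = ∑ x ∈ Finset.HasAntidiagonal.antidiagonal n, f x.swap := by
  conv_lhs => rw [← Finset.HasAntidiagonal.map_swap_antidiagonal]
  rw [Finset.sum_map]
  rfl

variable {K : Type*} [Field K] {α β : K}

lemma conjPoly_coeff (f : Polynomial ℍ[K,α,β]) (n : ℕ) :
    (conjPoly f).coeff n = star (f.coeff n) := by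
  rw [conjPoly, Polynomial.sum, finset_sum_coeff]
  simp only [coeff_C_mul, coeff_X_pow, mul_ite, mul_one, mul_zero]
  rw [Finset.sum_ite_eq f.support n fun k => star (f.coeff k)]
  split
  · rfl
  · next h => rw [Polynomial.notMem_support_iff.mp h, star_zero]

lemma conjPoly_add (f g : Polynomial ℍ[K,α,β]) :
    conjPoly (f + g) = conjPoly f + conjPoly g :=
  Polynomial.ext fun n => by simp [conjPoly_coeff]

lemma conjPoly_neg (f : Polynomial ℍ[K,α,β]) : conjPoly (-f) = -conjPoly f :=
  Polynomial.ext fun n => by simp [conjPoly_coeff]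

lemma conjPoly_sub (f g : Polynomial ℍ[K,α,β]) :
    conjPoly (f - g) = conjPoly f - conjPoly g :=
  Polynomial.ext fun n => by simp [conjPoly_coeff, sub_eq_add_neg]

lemma conjPoly_conjPoly (f : Polynomial ℍ[K,α,β]) : conjPoly (conjPoly f) = f :=
  Polynomial.ext fun n => by simp [conjPoly_coeff]

lemma conjPoly_mul (f g : Polynomial ℍ[K,α,β]) :
    conjPoly (f * g) = conjPoly g * conjPoly f := by
  refine Polynomial.ext fun n => ?_
  rw [conjPoly_coeff, coeff_mul, coeff_mul, star_sum,
    sum_antidiagonal_swap n fun x => (conjPoly g).coeff x.1 * (conjPoly f).coeff x.2]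
  refine Finset.sum_congr rfl fun x hx => ?_
  simp [conjPoly_coeff, star_mul]

lemma conjPoly_monomial (n : ℕ) (a : ℍ[K,α,β]) :
    conjPoly (monomial n a) = monomial n (star a) :=
  Polynomial.ext fun k => by
    simp [conjPoly_coeff, coeff_monomial, apply_ite (star : ℍ[K,α,β] → _)]

lemma conjPoly_map (h : K[X]) :
    conjPoly (h.map (algebraMap K ℍ[K,α,β])) = h.map (algebraMap K ℍ[K,α,β]) :=
  Polynomial.ext fun n => by
    simp [conjPoly_coeff, coeff_map, QuaternionAlgebra.coe_algebraMap,
      QuaternionAlgebra.star_coe]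

lemma map_comm (h : K[X]) (g : Polynomial ℍ[K,α,β]) :
    h.map (algebraMap K ℍ[K,α,β]) * g = g * h.map (algebraMap K ℍ[K,α,β]) := by
  refine Polynomial.ext fun n => ?_
  rw [coeff_mul, coeff_mul,
    sum_antidiagonal_swap n fun x => g.coeff x.1 * (h.map (algebraMap K ℍ[K,α,β])).coeff x.2]
  refine Finset.sum_congr rfl fun x hx => ?_
  simp only [Prod.fst_swap, Prod.snd_swap, coeff_map]
  exact Algebra.commutes _ _

lemma trace_scalar (a b : ℍ[K,α,β]) :
    star a * b + star b * a = algebraMap K ℍ[K,α,β] (2 * (star a * b).re) := by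
  have := QuaternionAlgebra.self_add_star' (star a * b)
  rw [star_mul, star_star] at this
  rw [this, QuaternionAlgebra.coe_algebraMap, zero_mul, add_zero]

lemma star_mul_self_scalar (a : ℍ[K,α,β]) :
    star a * a = algebraMap K ℍ[K,α,β] ((star a * a).re) := by
  rw [QuaternionAlgebra.coe_algebraMap]
  ext <;> simp [QuaternionAlgebra.imI_mul, QuaternionAlgebra.imJ_mul,
    QuaternionAlgebra.imK_mul] <;> ring

end ConjAux

namespace ConjAux

variable {K : Type*} [Field K] {α β : K}

lemma polar_scalar (f g : Polynomial ℍ[K,α,β]) :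
    ∃ h : K[X], conjPoly f * g + conjPoly g * f = h.map (algebraMap K ℍ[K,α,β]) := by
  induction f using Polynomial.induction_on' with
  | add u v hu hv =>
    obtain ⟨h1, e1⟩ := hu
    obtain ⟨h2, e2⟩ := hv
    refine ⟨h1 + h2, ?_⟩
    rw [Polynomial.map_add, ← e1, ← e2, conjPoly_add]
    noncomm_ring
  | monomial n a =>
    induction g using Polynomial.induction_on' with
    | add u v hu hv =>
      obtain ⟨h1, e1⟩ := hu
      obtain ⟨h2, e2⟩ := hv
      refine ⟨h1 + h2, ?_⟩
      rw [Polynomial.map_add, ← e1, ← e2, conjPoly_add]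
      noncomm_ring
    | monomial m b =>
      refine ⟨monomial (n + m) (2 * (star a * b).re), ?_⟩
      rw [conjPoly_monomial, conjPoly_monomial, monomial_mul_monomial,
        monomial_mul_monomial, Polynomial.map_monomial, add_comm m n, ← map_add (monomial (n + m)),
        trace_scalar]

lemma norm_scalar (f : Polynomial ℍ[K,α,β]) :
    ∃ h : K[X], conjPoly f * f = h.map (algebraMap K ℍ[K,α,β]) := by
  induction f using Polynomial.induction_on' with
  | add u v hu hv =>
    obtain ⟨h1, e1⟩ := hu
    obtain ⟨h2, e2⟩ := hv
    obtain ⟨h3, e3⟩ := polar_scalar (α := α) (β := β) u v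
    refine ⟨h1 + h2 + h3, ?_⟩
    rw [Polynomial.map_add, Polynomial.map_add, ← e1, ← e2, ← e3, conjPoly_add]
    noncomm_ring
  | monomial n a =>
    refine ⟨monomial (n + n) ((star a * a).re), ?_⟩
    rw [conjPoly_monomial, monomial_mul_monomial, Polynomial.map_monomial]
    conv_lhs => rw [star_mul_self_scalar]

lemma map_cancel {q : K[X]} (hq : q ≠ 0) {A B : Polynomial ℍ[K,α,β]}
    (h : A * q.map (algebraMap K ℍ[K,α,β]) = B * q.map (algebraMap K ℍ[K,α,β])) :
    A = B := by
  set φ := algebraMap K ℍ[K,α,β]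
  have hc : q.leadingCoeff ≠ 0 := leadingCoeff_ne_zero.mpr hq
  have hmon : (C q.leadingCoeff⁻¹ * q).Monic := by
    rw [Monic, leadingCoeff_mul, leadingCoeff_C, inv_mul_cancel₀ hc]
  have hmon' : ((C q.leadingCoeff⁻¹ * q).map φ).Monic := hmon.map φ
  have hdec : q.map φ = C (φ q.leadingCoeff) * (C q.leadingCoeff⁻¹ * q).map φ := by
    rw [← Polynomial.map_C, ← Polynomial.map_mul, ← mul_assoc, ← C_mul,
      mul_inv_cancel₀ hc, C_1, one_mul]
  rw [hdec, ← mul_assoc, ← mul_assoc] at h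
  have h2 : A * C (φ q.leadingCoeff) = B * C (φ q.leadingCoeff) :=
    hmon'.isRegular.right h
  have h3 : A * C (φ q.leadingCoeff) * C (φ q.leadingCoeff⁻¹)
      = B * C (φ q.leadingCoeff) * C (φ q.leadingCoeff⁻¹) := by rw [h2]
  rwa [mul_assoc, mul_assoc, ← C_mul, ← map_mul, mul_inv_cancel₀ hc, map_one, C_1,
    mul_one, mul_one] at h3

end ConjAux


/-- Let `A = (α,β/K)` be a quaternion algebra over a field `K`, let
`p, q ∈ K[X]` with `q ≠ 0`, `𝔭 ∈ A[X]` with `p·q = 𝔭·𝔭̄`, and `𝔯 ∈ A[X]` with `𝔭 = 𝔰·q + 𝔯`.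
If `𝔮 ∈ A[X]` satisfies `𝔮·q = 𝔭·𝔯̄`, then `p` divides `𝔮·𝔮̄` in `A[X]`. -/
theorem central_dvd_improved_norm {K : Type*} [Field K] (α β : K)
    (p q : K[X]) (hq : q ≠ 0) (𝔭 𝔰 𝔯 𝔮 : Polynomial ℍ[K,α,β])
    (hnorm : (p * q).map (algebraMap K ℍ[K,α,β]) = 𝔭 * conjPoly 𝔭)
    (hrem : 𝔭 = 𝔰 * q.map (algebraMap K ℍ[K,α,β]) + 𝔯)
    (h𝔮 : 𝔮 * q.map (algebraMap K ℍ[K,α,β]) = 𝔭 * conjPoly 𝔯) :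
    ∃ 𝔥 : Polynomial ℍ[K,α,β], 𝔮 * conjPoly 𝔮 = 𝔥 * p.map (algebraMap K ℍ[K,α,β]) := by
  open ConjAux in
  obtain ⟨h, hh⟩ := ConjAux.norm_scalar 𝔰
  have cq := ConjAux.map_comm (α := α) (β := β) q
  have cp := ConjAux.map_comm (α := α) (β := β) p
  have ch := ConjAux.map_comm (α := α) (β := β) h
  have hpp : 𝔭 * conjPoly 𝔭 = p.map (algebraMap K ℍ[K,α,β]) * q.map (algebraMap K ℍ[K,α,β]) := by
    rw [← hnorm, Polynomial.map_mul]
  have hr : 𝔯 = 𝔭 - 𝔰 * q.map (algebraMap K ℍ[K,α,β]) := by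
    rw [hrem, add_sub_cancel_left]
  have hcr : conjPoly 𝔯 = conjPoly 𝔭 - q.map (algebraMap K ℍ[K,α,β]) * conjPoly 𝔰 := by
    rw [hr, ConjAux.conjPoly_sub, ConjAux.conjPoly_mul, ConjAux.conjPoly_map]
  have A2 : q.map (algebraMap K ℍ[K,α,β]) * conjPoly 𝔮 = 𝔯 * conjPoly 𝔭 := by
    have := congrArg conjPoly h𝔮
    rwa [ConjAux.conjPoly_mul, ConjAux.conjPoly_mul, ConjAux.conjPoly_map,
      ConjAux.conjPoly_conjPoly] at this
  have e1 : 𝔭 * conjPoly 𝔯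
      = (p.map (algebraMap K ℍ[K,α,β]) - 𝔭 * conjPoly 𝔰) * q.map (algebraMap K ℍ[K,α,β]) := by
    rw [hcr, mul_sub, hpp, cq (conjPoly 𝔰), ← mul_assoc, ← sub_mul]
  have e2 : 𝔯 * conjPoly 𝔭
      = (p.map (algebraMap K ℍ[K,α,β]) - 𝔰 * conjPoly 𝔭) * q.map (algebraMap K ℍ[K,α,β]) := by
    rw [hr, sub_mul, hpp, mul_assoc 𝔰, cq (conjPoly 𝔭), ← mul_assoc, ← sub_mul]
  refine ⟨p.map (algebraMap K ℍ[K,α,β]) - 𝔰 * conjPoly 𝔭 - 𝔭 * conjPoly 𝔰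
      + h.map (algebraMap K ℍ[K,α,β]) * q.map (algebraMap K ℍ[K,α,β]), ?_⟩
  have t4 : 𝔭 * conjPoly 𝔰 * (𝔰 * conjPoly 𝔭)
      = h.map (algebraMap K ℍ[K,α,β]) * q.map (algebraMap K ℍ[K,α,β])
        * p.map (algebraMap K ℍ[K,α,β]) := by
    rw [mul_assoc 𝔭 (conjPoly 𝔰), ← mul_assoc (conjPoly 𝔰), hh, ← mul_assoc 𝔭,
      ← ch 𝔭, mul_assoc, hpp, cp (q.map (algebraMap K ℍ[K,α,β])), ← mul_assoc]
  have key : (p.map (algebraMap K ℍ[K,α,β]) - 𝔭 * conjPoly 𝔰)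
      * (p.map (algebraMap K ℍ[K,α,β]) - 𝔰 * conjPoly 𝔭)
      = (p.map (algebraMap K ℍ[K,α,β]) - 𝔰 * conjPoly 𝔭 - 𝔭 * conjPoly 𝔰
          + h.map (algebraMap K ℍ[K,α,β]) * q.map (algebraMap K ℍ[K,α,β]))
        * p.map (algebraMap K ℍ[K,α,β]) := by
    rw [sub_mul, mul_sub, mul_sub, t4, cp (𝔰 * conjPoly 𝔭)]
    noncomm_ring
  apply ConjAux.map_cancel (mul_ne_zero hq hq)
  rw [Polynomial.map_mul]
  calc 𝔮 * conjPoly 𝔮 * (q.map (algebraMap K ℍ[K,α,β]) * q.map (algebraMap K ℍ[K,α,β]))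
      = 𝔮 * (conjPoly 𝔮 * q.map (algebraMap K ℍ[K,α,β])) * q.map (algebraMap K ℍ[K,α,β]) := by
        noncomm_ring
    _ = 𝔮 * (q.map (algebraMap K ℍ[K,α,β]) * conjPoly 𝔮) * q.map (algebraMap K ℍ[K,α,β]) := by
        rw [cq (conjPoly 𝔮)]
    _ = (𝔮 * q.map (algebraMap K ℍ[K,α,β])) * (conjPoly 𝔮 * q.map (algebraMap K ℍ[K,α,β])) := by
        noncomm_ring
    _ = (𝔮 * q.map (algebraMap K ℍ[K,α,β])) * (q.map (algebraMap K ℍ[K,α,β]) * conjPoly 𝔮) := by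
        rw [cq (conjPoly 𝔮)]
    _ = (𝔭 * conjPoly 𝔯) * (𝔯 * conjPoly 𝔭) := by rw [h𝔮, A2]
    _ = ((p.map (algebraMap K ℍ[K,α,β]) - 𝔭 * conjPoly 𝔰) * q.map (algebraMap K ℍ[K,α,β]))
        * ((p.map (algebraMap K ℍ[K,α,β]) - 𝔰 * conjPoly 𝔭) * q.map (algebraMap K ℍ[K,α,β])) := by
        rw [e1, e2]
    _ = (p.map (algebraMap K ℍ[K,α,β]) - 𝔭 * conjPoly 𝔰)
        * (q.map (algebraMap K ℍ[K,α,β]) * (p.map (algebraMap K ℍ[K,α,β]) - 𝔰 * conjPoly 𝔭))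
        * q.map (algebraMap K ℍ[K,α,β]) := by noncomm_ring
    _ = (p.map (algebraMap K ℍ[K,α,β]) - 𝔭 * conjPoly 𝔰)
        * ((p.map (algebraMap K ℍ[K,α,β]) - 𝔰 * conjPoly 𝔭) * q.map (algebraMap K ℍ[K,α,β]))
        * q.map (algebraMap K ℍ[K,α,β]) := by
        rw [cq (p.map (algebraMap K ℍ[K,α,β]) - 𝔰 * conjPoly 𝔭)]
    _ = ((p.map (algebraMap K ℍ[K,α,β]) - 𝔭 * conjPoly 𝔰)
        * (p.map (algebraMap K ℍ[K,α,β]) - 𝔰 * conjPoly 𝔭))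
        * (q.map (algebraMap K ℍ[K,α,β]) * q.map (algebraMap K ℍ[K,α,β])) := by noncomm_ring
    _ = _ := by rw [key]
end

section
/- Let A = (α,β/K) be a division quaternion algebra over a field K and suppose 𝔭 ∈ A[X] factors into linear factors: 𝔭 = (X − a₁)·(X − a₂)···(X − aₙ) with a₁, …, aₙ ∈ A. Then every root b ∈ A of 𝔭 is conjugate to some aᵢ, i.e., there exist an index i and an invertible c ∈ A with b = c·aᵢ·c⁻¹. -/
open Polynomial Quaternion

theorem aux_root_conj {K : Type*} [Field K] (α β : K)
    (hdiv : ∀ x : ℍ[K,α,β], x ≠ 0 → IsUnit x) :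
    ∀ (n : ℕ) (a : Fin n → ℍ[K,α,β]) (b : ℍ[K,α,β]),
      ((List.ofFn fun i => Polynomial.X - Polynomial.C (a i)).prod).eval b = 0 →
    ∃ (i : Fin n) (c : ℍ[K,α,β]ˣ),
      b = (c : ℍ[K,α,β]) * a i * ((c⁻¹ : ℍ[K,α,β]ˣ) : ℍ[K,α,β]) := by
  intro n
  induction n with
  | zero =>
    intro a b hb
    simp at hb
  | succ n ih =>
    intro a b hb
    set q : Polynomial ℍ[K,α,β] :=
      (List.ofFn fun i : Fin n => Polynomial.X - Polynomial.C (a i.succ)).prod with hq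
    have hprod : (List.ofFn fun i : Fin (n+1) => Polynomial.X - Polynomial.C (a i)).prod
        = (Polynomial.X - Polynomial.C (a 0)) * q := by
      rw [List.ofFn_succ, List.prod_cons]
    rw [hprod] at hb
    have hexp : ((Polynomial.X - Polynomial.C (a 0)) * q).eval b
        = q.eval b * b - a 0 * q.eval b := by
      rw [sub_mul, X_mul, eval_sub, eval_mul_X, eval_C_mul]
    rw [hexp] at hb
    by_cases hq0 : q.eval b = 0
    · obtain ⟨i, c, hc⟩ := ih (fun i => a i.succ) b (by rw [← hq]; exact hq0)
      exact ⟨i.succ, c, hc⟩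
    · obtain ⟨u, hu⟩ := hdiv _ hq0
      refine ⟨0, u⁻¹, ?_⟩
      have h1 : q.eval b * b = a 0 * q.eval b := by
        have := sub_eq_zero.mp hb
        exact this
      rw [← hu] at h1
      have h2 : b = ((u⁻¹ : ℍ[K,α,β]ˣ) : ℍ[K,α,β]) * a 0 * (u : ℍ[K,α,β]) := by
        rw [mul_assoc, ← h1, ← mul_assoc, Units.inv_mul, one_mul]
      simpa using h2

/-- Let `A = (α,β/K)` be a division quaternion algebra over a field `K` and
suppose `𝔭 ∈ A[X]` factors into linear factors `𝔭 = (X − a₁)·(X − a₂)···(X − aₙ)`.  Then every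
root `b ∈ A` of `𝔭` is conjugate to some `aᵢ`. -/
theorem root_conjugate_of_linear_factorization {K : Type*} [Field K] (α β : K)
    (hα : α ≠ 0) (hβ : β ≠ 0)
    (hdiv : ∀ x : ℍ[K,α,β], x ≠ 0 → IsUnit x)
    (n : ℕ) (a : Fin n → ℍ[K,α,β]) (𝔭 : Polynomial ℍ[K,α,β])
    (hfact : 𝔭 = (List.ofFn fun i => Polynomial.X - Polynomial.C (a i)).prod)
    (b : ℍ[K,α,β]) (hb : 𝔭.eval b = 0) :
    ∃ (i : Fin n) (c : ℍ[K,α,β]ˣ), b = (c : ℍ[K,α,β]) * a i * ((c⁻¹ : ℍ[K,α,β]ˣ) : ℍ[K,α,β]) := by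
  subst hfact
  exact aux_root_conj α β hdiv n a b hb
end

section
/- Let A = (α,β/K) be a division quaternion algebra over a field K, let 𝔭 ∈ A[X] be a non-constant polynomial, and let a ∈ A be a nonzero quaternion. Then the following are equivalent: (i) a is conjugate to some root b of 𝔭; (ii) the characteristic polynomial Δ_a = X² − Tr(a)·X + N(a) divides the norm N(𝔭) = 𝔭·𝔭̄ in K[X]; (iii) a is a root of N(𝔭). -/
open Polynomial Quaternion

namespace Aux

variable {K : Type*} [Field K] {α β : K}

local notation "A" => ℍ[K,α,β]

theorem nzd (hdiv : ∀ x : A, x ≠ 0 → IsUnit x) : NoZeroDivisors A := by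
  constructor
  intro x y h
  by_cases hx : x = 0
  · exact Or.inl hx
  · obtain ⟨u, hu⟩ := hdiv x hx
    refine Or.inr ?_
    have : y = ↑u⁻¹ * (x * y) := by rw [← hu, ← mul_assoc, Units.inv_mul, one_mul]
    rw [this, h, mul_zero]

theorem coeff_conjPoly (p : A[X]) (k : ℕ) : (conjPoly p).coeff k = star (p.coeff k) := by
  simp only [conjPoly, Polynomial.sum, finset_sum_coeff, coeff_C_mul, coeff_X_pow,
    mul_ite, mul_one, mul_zero]
  rw [Finset.sum_ite_eq p.support k fun n => star (p.coeff n)]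
  by_cases h : k ∈ p.support
  · simp [h]
  · simp [h, notMem_support_iff.1 h]

theorem conjPoly_add (p q : A[X]) : conjPoly (p + q) = conjPoly p + conjPoly q := by
  refine Polynomial.ext fun k => ?_; simp [coeff_conjPoly]

theorem conjPoly_mul (p q : A[X]) : conjPoly (p * q) = conjPoly q * conjPoly p := by
  refine Polynomial.ext fun k => ?_
  rw [coeff_conjPoly, coeff_mul, coeff_mul, ← Finset.Nat.sum_antidiagonal_swap]
  simp only [star_sum, star_mul, coeff_conjPoly, Prod.fst_swap, Prod.snd_swap]

theorem conjPoly_C (a : A) : conjPoly (Polynomial.C a) = Polynomial.C (star a) := by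
  refine Polynomial.ext fun k => ?_; simp [coeff_conjPoly, coeff_C, apply_ite star]

theorem conjPoly_X : conjPoly (X : A[X]) = X := by
  refine Polynomial.ext fun k => ?_; simp [coeff_conjPoly, coeff_X, apply_ite star]

theorem conjPoly_map (f : K[X]) :
    conjPoly (f.map (algebraMap K A)) = f.map (algebraMap K A) := by
  refine Polynomial.ext fun k => ?_
  simp [coeff_conjPoly, coeff_map, QuaternionAlgebra.coe_algebraMap,
    QuaternionAlgebra.star_coe]

theorem conjPoly_eq_zero {p : A[X]} (h : conjPoly p = 0) : p = 0 := by
  refine Polynomial.ext fun k => ?_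
  have h2 := congrArg (fun q => Polynomial.coeff q k) h
  simp only [coeff_conjPoly, coeff_zero] at h2
  rw [coeff_zero, ← star_star (p.coeff k), h2, star_zero]

theorem map_comm (g : K[X]) (f : A[X]) :
    g.map (algebraMap K A) * f = f * g.map (algebraMap K A) := by
  refine Polynomial.ext fun k => ?_
  rw [coeff_mul, coeff_mul, ← Finset.Nat.sum_antidiagonal_swap]
  simp only [coeff_map, Prod.fst_swap, Prod.snd_swap, QuaternionAlgebra.coe_algebraMap,
    QuaternionAlgebra.coe_commutes]

theorem eval_mul_eq_sum (p q : A[X]) (x : A) :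
    (p * q).eval x = ∑ i ∈ p.support, p.coeff i * q.eval x * x ^ i := by
  conv_lhs => rw [← p.sum_C_mul_X_pow_eq]
  rw [Polynomial.sum, Finset.sum_mul, eval_finset_sum]
  refine Finset.sum_congr rfl fun i _ => ?_
  rw [mul_assoc, X_pow_mul, ← mul_assoc, eval_mul_X_pow, eval_C_mul]

theorem eval_mul_eq_zero {q : A[X]} {x : A} (h : q.eval x = 0) (p : A[X]) :
    (p * q).eval x = 0 := by
  simp [eval_mul_eq_sum, h]


theorem charpoly_id (x : A) :
    x * x - (x + star x) * x + x * star x = 0 := by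
  have h : star x * x = x * star x := star_comm_self' x
  rw [add_mul, h]
  abel

theorem coe_trace (x : A) : (((x + star x).re : K) : A) = x + star x := by
  rw [QuaternionAlgebra.self_add_star', QuaternionAlgebra.re_coe]

theorem coe_norm (x : A) : (((x * star x).re : K) : A) = x * star x :=
  (QuaternionAlgebra.mul_star_eq_coe x).symm

/-- The geometric-series factorization `X^n - C c^n = q * (X - C c)`. -/
theorem X_pow_sub_C_pow_factor (c : A) (n : ℕ) :
    X ^ n - Polynomial.C (c ^ n) =
      (∑ j ∈ Finset.range n, X ^ (n - 1 - j) * Polynomial.C (c ^ j)) * (X - Polynomial.C c) := by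
  rw [Finset.sum_mul]
  have key : ∀ j ∈ Finset.range n,
      (X ^ (n - 1 - j) * Polynomial.C (c ^ j)) * (X - Polynomial.C c)
        = (X ^ (n - j) * Polynomial.C (c ^ j) - X ^ (n - (j+1)) * Polynomial.C (c ^ (j+1))) := by
    intro j hj
    have hjn : j < n := Finset.mem_range.1 hj
    have h1 : n - 1 - j = n - (j + 1) := by omega
    have h2 : n - j = (n - (j+1)) + 1 := by omega
    rw [mul_sub, h1, mul_assoc, ← X_mul_C, ← mul_assoc, ← pow_succ, ← h2, mul_assoc, ← C_mul,
      ← pow_succ]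
  rw [Finset.sum_congr rfl key, Finset.sum_range_sub']
  simp

theorem exists_quotient_remainder (p : A[X]) (c : A) :
    ∃ q : A[X], p = q * (X - Polynomial.C c) + Polynomial.C (p.eval c) := by
  induction p using Polynomial.induction_on' with
  | add p q hp hq =>
    obtain ⟨qp, hp⟩ := hp
    obtain ⟨qq, hq⟩ := hq
    refine ⟨qp + qq, ?_⟩
    rw [eval_add, map_add]
    conv_lhs => rw [hp, hq]
    rw [add_mul]
    abel
  | monomial n a =>
    refine ⟨Polynomial.C a * ∑ j ∈ Finset.range n, X ^ (n - 1 - j) * Polynomial.C (c ^ j), ?_⟩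
    rw [mul_assoc, ← X_pow_sub_C_pow_factor, eval_monomial, ← C_mul_X_pow_eq_monomial,
      mul_sub, ← C_mul]
    abel

theorem exists_factor_of_eval_eq_zero {p : A[X]} {c : A} (h : p.eval c = 0) :
    ∃ q : A[X], p = q * (X - Polynomial.C c) := by
  obtain ⟨q, hq⟩ := exists_quotient_remainder p c
  exact ⟨q, by rwa [h, map_zero, add_zero] at hq⟩
/-- Elements with the same trace and norm are conjugate in a division quaternion algebra. -/
theorem conj_of_trace_norm (hα : α ≠ 0) (hβ : β ≠ 0) (hdiv : ∀ x : A, x ≠ 0 → IsUnit x)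
    (a b : A) (h1 : a + star a = b + star b) (h2 : a * star a = b * star b) :
    ∃ c : Aˣ, a = ↑c * b * ↑c⁻¹ := by
  have key : ∀ c : A, c ≠ 0 → a * c = c * b → ∃ c : Aˣ, a = ↑c * b * ↑c⁻¹ := by
    intro c hc hac
    obtain ⟨u, hu⟩ := hdiv c hc
    refine ⟨u, ?_⟩
    rw [Units.eq_mul_inv_iff_mul_eq, hu, hac]
  by_cases hd : a - star b = 0
  · have hab : b = star a := by
      rw [sub_eq_zero] at hd
      rw [hd, star_star]
    by_cases hba : a = b
    · exact ⟨1, by simp [hba]⟩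
    · have hsa : a ≠ star a := fun h => hba (by rw [hab, ← h])
      have him : a.imI ≠ 0 ∨ a.imJ ≠ 0 ∨ a.imK ≠ 0 := by
        by_contra hc
        push_neg at hc
        obtain ⟨h1', h2', h3'⟩ := hc
        exact hsa (by ext <;> simp [h1', h2', h3'])
      obtain ⟨c, hc0, hre, horth⟩ : ∃ c : A, c ≠ 0 ∧ c.re = 0 ∧
          α * a.imI * c.imI + β * a.imJ * c.imJ - α * β * a.imK * c.imK = 0 := by
        rcases him with hx | hy | hz
        · refine ⟨⟨0, β * a.imJ, -(α * a.imI), 0⟩, ?_, rfl, by ring⟩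
          intro h
          have h' := congrArg QuaternionAlgebra.imJ h
          simp at h'
          tauto
        · refine ⟨⟨0, β * a.imJ, -(α * a.imI), 0⟩, ?_, rfl, by ring⟩
          intro h
          have h' := congrArg QuaternionAlgebra.imI h
          simp at h'
          tauto
        · refine ⟨⟨0, β * a.imK, 0, a.imI⟩, ?_, rfl, by ring⟩
          intro h
          have h' := congrArg QuaternionAlgebra.imI h
          simp at h'
          tauto
      refine key c hc0 ?_
      rw [hab]
      ext
      · show (a * c).re = (c * star a).re
        simp only [QuaternionAlgebra.re_mul, QuaternionAlgebra.re_star, QuaternionAlgebra.imI_star,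
          QuaternionAlgebra.imJ_star, QuaternionAlgebra.imK_star, hre]
        linear_combination 2 * horth
      · show (a * c).imI = (c * star a).imI
        simp only [QuaternionAlgebra.imI_mul, QuaternionAlgebra.re_star,
          QuaternionAlgebra.imI_star, QuaternionAlgebra.imJ_star, QuaternionAlgebra.imK_star, hre]
        ring
      · show (a * c).imJ = (c * star a).imJ
        simp only [QuaternionAlgebra.imJ_mul, QuaternionAlgebra.re_star,
          QuaternionAlgebra.imI_star, QuaternionAlgebra.imJ_star, QuaternionAlgebra.imK_star, hre]
        ring
      · show (a * c).imK = (c * star a).imK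
        simp only [QuaternionAlgebra.imK_mul, QuaternionAlgebra.re_star,
          QuaternionAlgebra.imI_star, QuaternionAlgebra.imJ_star, QuaternionAlgebra.imK_star, hre]
        ring
  · refine key _ hd ?_
    have hsb : star b = a + star a - b := by rw [h1]; abel
    have hbb : star b * b = a * star a := by rw [star_comm_self' b, ← h2]
    have hd' : a - star b = b - star a := by rw [hsb]; abel
    rw [hd']
    have hbsq : b * b = (a + star a) * b - a * star a := by
      have h3 : (b + star b) * b = b * b + star b * b := add_mul _ _ _
      rw [← h1, hbb] at h3
      rw [eq_sub_iff_add_eq, h3]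
    calc a * (b - star a) = a * b - a * star a := mul_sub _ _ _
      _ = (b - star a) * b := by rw [sub_mul, hbsq, add_mul]; abel
theorem monic_delta (t nr : K) : (X ^ 2 - Polynomial.C t * X + Polynomial.C nr).Monic := by
  have h : (X ^ 2 - Polynomial.C t * X + Polynomial.C nr : K[X])
      = X ^ 2 - (Polynomial.C t * X - Polynomial.C nr) := by ring
  rw [h]
  refine monic_X_pow_sub ?_
  refine lt_of_le_of_lt (degree_sub_le _ _) ?_
  rw [max_lt_iff]
  constructor
  · calc (Polynomial.C t * X).degree ≤ (Polynomial.C t).degree + X.degree := degree_mul_le _ _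
      _ ≤ 0 + 1 := add_le_add degree_C_le degree_X.le
      _ < 2 := by decide
  · exact lt_of_le_of_lt degree_C_le (by decide)

theorem degree_delta (t nr : K) : (X ^ 2 - Polynomial.C t * X + Polynomial.C nr).degree = 2 := by
  have h : (X ^ 2 - Polynomial.C t * X + Polynomial.C nr : K[X])
      = Polynomial.C 1 * X ^ 2 + Polynomial.C (-t) * X + Polynomial.C nr := by
    simp only [map_neg, map_one, one_mul, neg_mul]
    ring
  rw [h, degree_quadratic one_ne_zero]

theorem aeval_delta (x : A) :
    (Polynomial.aeval x) (X ^ 2 - Polynomial.C ((x + star x).re) * X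
      + Polynomial.C ((x * star x).re) : K[X]) = 0 := by
  simp only [map_add, map_sub, map_mul, map_pow, aeval_X, aeval_C,
    QuaternionAlgebra.coe_algebraMap]
  rw [coe_trace, coe_norm, sq]
  exact charpoly_id x

theorem dvd_of_map_dvd (hdiv : ∀ x : A, x ≠ 0 → IsUnit x) {d n : K[X]} (hd : d.Monic)
    (h : d.map (algebraMap K A) ∣ n.map (algebraMap K A)) : d ∣ n := by
  haveI := nzd (α := α) (β := β) hdiv
  have inj : Function.Injective (algebraMap K A) := by
    rw [QuaternionAlgebra.coe_algebraMap]
    exact QuaternionAlgebra.coe_injective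
  obtain ⟨w, hw⟩ := h
  rw [← modByMonic_eq_zero_iff_dvd hd]
  by_contra hr
  have heq : (n %ₘ d) + d * (n /ₘ d) = n := modByMonic_add_div n d
  have hmap : d.map (algebraMap K A) * w
      = (n %ₘ d).map (algebraMap K A) + d.map (algebraMap K A) * (n /ₘ d).map (algebraMap K A) := by
    rw [← hw, ← Polynomial.map_mul, ← Polynomial.map_add, heq]
  have hkey : d.map (algebraMap K A) * (w - (n /ₘ d).map (algebraMap K A))
      = (n %ₘ d).map (algebraMap K A) := by
    rw [mul_sub, hmap]
    abel
  have hw0 : w - (n /ₘ d).map (algebraMap K A) ≠ 0 := by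
    intro h0
    rw [h0, mul_zero] at hkey
    exact hr ((Polynomial.map_eq_zero_iff inj).1 hkey.symm)
  have h1 : (d.map (algebraMap K A)).degree ≤ ((n %ₘ d).map (algebraMap K A)).degree := by
    rw [← hkey, degree_mul]
    exact le_add_of_nonneg_right (zero_le_degree_iff.2 hw0)
  rw [degree_map_eq_of_injective inj, degree_map_eq_of_injective inj] at h1
  exact absurd (degree_modByMonic_lt n hd) (not_lt.2 h1)

theorem eval_conjPoly_coe (p : A[X]) (r : K) :
    (conjPoly p).eval (r : A) = star (p.eval (r : A)) := by
  rw [conjPoly, Polynomial.sum, eval_finset_sum, Polynomial.eval_eq_sum, Polynomial.sum, star_sum]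
  refine Finset.sum_congr rfl fun i _ => ?_
  rw [C_mul_X_pow_eq_monomial, eval_monomial, star_mul, ← QuaternionAlgebra.coe_pow,
    QuaternionAlgebra.star_coe, QuaternionAlgebra.coe_commutes]

theorem eval_central_mul (p q : A[X]) (r : K) :
    (p * q).eval (r : A) = p.eval (r : A) * q.eval (r : A) := by
  rw [eval_mul_eq_sum]
  conv_rhs => rw [Polynomial.eval_eq_sum, Polynomial.sum]
  rw [Finset.sum_mul]
  refine Finset.sum_congr rfl fun i _ => ?_
  rw [mul_assoc, mul_assoc, ← QuaternionAlgebra.coe_pow, ← QuaternionAlgebra.coe_commutes]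

theorem linear_mul_linear (u v u' v' : A) :
    (Polynomial.C u * X + Polynomial.C v) * (Polynomial.C u' * X + Polynomial.C v')
      = Polynomial.C (u * u') * X ^ 2 + Polynomial.C (u * v' + v * u') * X
        + Polynomial.C (v * v') := by
  have hX : ∀ a : A, X * Polynomial.C a = Polynomial.C a * X := fun a => X_mul
  rw [add_mul, mul_add, mul_add, ← C_mul]
  have h1 : Polynomial.C u * X * (Polynomial.C u' * X) = Polynomial.C (u * u') * X ^ 2 := by
    rw [mul_assoc, ← mul_assoc X, hX, mul_assoc, ← mul_assoc, ← C_mul, ← sq]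
  have h2 : Polynomial.C u * X * Polynomial.C v' = Polynomial.C (u * v') * X := by
    rw [mul_assoc, hX, ← mul_assoc, ← C_mul]
  have h3 : Polynomial.C v * (Polynomial.C u' * X) = Polynomial.C (v * u') * X := by
    rw [← mul_assoc, ← C_mul]
  rw [h1, h2, h3, map_add, add_mul]
  abel
theorem deg_le_one_of_lt_two {d : WithBot ℕ} (h : d < 2) : d ≤ 1 := by
  cases d with
  | bot => exact bot_le
  | coe m => exact WithBot.coe_le_coe.2 (Nat.lt_succ_iff.1 (WithBot.coe_lt_coe.1 h))

theorem deg_le_zero_of_two_add {d : WithBot ℕ} (h : 2 + d ≤ 2) : d ≤ 0 := by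
  cases d with
  | bot => exact bot_le
  | coe m =>
    have h2 : ((2 + m : ℕ) : WithBot ℕ) ≤ ((2 : ℕ) : WithBot ℕ) := h
    have h3 : (2 : ℕ) + m ≤ 2 := WithBot.coe_le_coe.1 h2
    exact WithBot.coe_le_coe.2 (by omega : m ≤ 0)

/-- Conjugation by a unit as a `K`-algebra homomorphism. -/
noncomputable def innerAut (c : Aˣ) : A →ₐ[K] A where
  toFun x := ↑c * x * ↑c⁻¹
  map_one' := by simp
  map_mul' x y := by simp [mul_assoc, Units.inv_mul_cancel_left]
  map_zero' := by simp
  map_add' x y := by simp [mul_add, add_mul]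
  commutes' r := by
    simp only [QuaternionAlgebra.coe_algebraMap]
    rw [← QuaternionAlgebra.coe_commutes, mul_assoc, Units.mul_inv, mul_one]

theorem aeval_units_conj (c : Aˣ) (x : A) (n : K[X]) :
    (Polynomial.aeval (↑c * x * ↑c⁻¹ : A)) n = ↑c * (Polynomial.aeval x) n * ↑c⁻¹ :=
  aeval_algHom_apply (innerAut (K := K) c) x n

theorem eval_D (t nr : K) (x : A) :
    ((X ^ 2 - Polynomial.C t * X + Polynomial.C nr : K[X]).map (algebraMap K A)).eval x
      = x * x - ((t : K) : A) * x + ((nr : K) : A) := by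
  have hX2 : ((X : A[X]) ^ 2).eval x = x * x := by
    rw [← one_mul ((X : A[X]) ^ 2), ← C_1, C_mul_X_pow_eq_monomial, eval_monomial, one_mul, sq]
  simp only [Polynomial.map_add, Polynomial.map_sub, Polynomial.map_mul, Polynomial.map_pow,
    map_X, map_C, eval_add, eval_sub, eval_C_mul, eval_X, eval_C, hX2,
    QuaternionAlgebra.coe_algebraMap]

theorem imp_i_iii (hdiv : ∀ x : A, x ≠ 0 → IsUnit x) (𝔭 : A[X]) (hdeg : 0 < 𝔭.degree)
    {n : K[X]} (hn : n.map (algebraMap K A) = 𝔭 * conjPoly 𝔭)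
    (a b : A) (c : Aˣ) (hb : 𝔭.eval b = 0) (hc : a = ↑c * b * ↑c⁻¹) :
    (Polynomial.aeval a) n = 0 := by
  haveI := nzd (α := α) (β := β) hdiv
  have hp0 : 𝔭 ≠ 0 := by
    intro h
    rw [h, degree_zero] at hdeg
    exact absurd hdeg (by decide)
  have hpc0 : conjPoly 𝔭 ≠ 0 := fun h => hp0 (conjPoly_eq_zero h)
  have hcomm : 𝔭 * conjPoly 𝔭 = conjPoly 𝔭 * 𝔭 := by
    have h1 : (n.map (algebraMap K A)) * conjPoly 𝔭 = conjPoly 𝔭 * (n.map (algebraMap K A)) :=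
      map_comm n _
    rw [hn] at h1
    have h2 : (𝔭 * conjPoly 𝔭) * conjPoly 𝔭 = (conjPoly 𝔭 * 𝔭) * conjPoly 𝔭 := by
      rw [h1, mul_assoc]
    exact mul_right_cancel₀ hpc0 h2
  have hb' : (Polynomial.aeval b) n = 0 := by
    rw [aeval_def, ← eval_map, hn, hcomm]
    exact eval_mul_eq_zero hb _
  rw [hc, aeval_units_conj, hb', mul_zero, zero_mul]

theorem imp_iii_ii (hdiv : ∀ x : A, x ≠ 0 → IsUnit x) (𝔭 : A[X])
    {n : K[X]} (hn : n.map (algebraMap K A) = 𝔭 * conjPoly 𝔭)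
    (a : A) (h : (Polynomial.aeval a) n = 0) :
    (X ^ 2 - Polynomial.C ((a + star a).re) * X + Polynomial.C ((a * star a).re)) ∣ n := by
  haveI := nzd (α := α) (β := β) hdiv
  set t := (a + star a).re with ht
  set nr := (a * star a).re with hnr
  set Δ : K[X] := X ^ 2 - Polynomial.C t * X + Polynomial.C nr with hΔdef
  have hΔ : Δ.Monic := monic_delta t nr
  by_cases him : a.imI = 0 ∧ a.imJ = 0 ∧ a.imK = 0
  · -- central case
    obtain ⟨h1', h2', h3'⟩ := him
    have ha' : a = ((a.re : K) : A) := by ext <;> simp [h1', h2', h3']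
    set r := a.re with hr
    have htr : t = r + r := by
      rw [ht]
      simp [hr]
    have hnr' : nr = r * r := by
      rw [hnr, ha']
      simp only [QuaternionAlgebra.star_coe, ← QuaternionAlgebra.coe_mul]
      simp
    have hΔeq : Δ = (X - Polynomial.C r) ^ 2 := by
      rw [hΔdef, htr, hnr', map_add, map_mul]
      ring
    have hev : 𝔭.eval ((r : K) : A) * (conjPoly 𝔭).eval ((r : K) : A) = 0 := by
      rw [← eval_central_mul, ← hn, eval_map, ← aeval_def, ← ha', h]
    have hE : 𝔭.eval ((r : K) : A) = 0 := by
      rcases mul_eq_zero.1 hev with hE | hE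
      · exact hE
      · rw [eval_conjPoly_coe] at hE
        exact star_eq_zero.1 hE
    obtain ⟨q1, hq1⟩ := exists_factor_of_eval_eq_zero hE
    have hXC : ((X - Polynomial.C r : K[X]).map (algebraMap K A))
        = X - Polynomial.C ((r : K) : A) := by
      rw [Polynomial.map_sub, map_X, map_C, QuaternionAlgebra.coe_algebraMap]
    have hq1' : conjPoly 𝔭 = (X - Polynomial.C ((r : K) : A)) * conjPoly q1 := by
      rw [hq1, conjPoly_mul, ← hXC, conjPoly_map, hXC]
    have hfac : n.map (algebraMap K A)
        = ((X - Polynomial.C r) ^ 2).map (algebraMap K A) * (q1 * conjPoly q1) := by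
      rw [hn, hq1', hq1, Polynomial.map_pow, hXC]
      have e1 : q1 * (X - Polynomial.C ((r : K) : A))
          = (X - Polynomial.C ((r : K) : A)) * q1 := by
        rw [← hXC, map_comm]
      calc q1 * (X - Polynomial.C ((r : K) : A))
            * ((X - Polynomial.C ((r : K) : A)) * conjPoly q1)
          = (X - Polynomial.C ((r : K) : A)) * q1
            * ((X - Polynomial.C ((r : K) : A)) * conjPoly q1) := by rw [e1]
        _ = (X - Polynomial.C ((r : K) : A)) * (q1 * (X - Polynomial.C ((r : K) : A)))
            * conjPoly q1 := by noncomm_ring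
        _ = (X - Polynomial.C ((r : K) : A)) * ((X - Polynomial.C ((r : K) : A)) * q1)
            * conjPoly q1 := by rw [e1]
        _ = (X - Polynomial.C ((r : K) : A)) ^ 2 * (q1 * conjPoly q1) := by
            rw [sq]
            noncomm_ring
    rw [hΔeq]
    exact dvd_of_map_dvd hdiv ((monic_X_sub_C r).pow 2) ⟨q1 * conjPoly q1, hfac⟩
  · -- noncentral case
    have hra : (Polynomial.aeval a) Δ = 0 := aeval_delta a
    set rr := n %ₘ Δ with hrrdef
    have hdeg' : rr.degree ≤ 1 := by
      have h2 := degree_modByMonic_lt n hΔ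
      rw [degree_delta] at h2
      exact deg_le_one_of_lt_two h2
    have hr2 : rr = Polynomial.C (rr.coeff 1) * X + Polynomial.C (rr.coeff 0) :=
      eq_X_add_C_of_degree_le_one hdeg'
    have haev : (Polynomial.aeval a) rr = 0 := by
      have hsub : rr = n - Δ * (n /ₘ Δ) := by
        rw [eq_sub_iff_add_eq, modByMonic_add_div n Δ]
      rw [hsub, map_sub, h, map_mul, hra, zero_mul, zero_sub, neg_zero]
    rw [hr2] at haev
    simp only [map_add, map_mul, aeval_X, aeval_C, QuaternionAlgebra.coe_algebraMap] at haev
    rw [QuaternionAlgebra.coe_mul_eq_smul] at haev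
    have hu : rr.coeff 1 = 0 := by
      push_neg at him
      by_cases hI : a.imI ≠ 0
      · have h1 := congrArg QuaternionAlgebra.imI haev
        simp at h1
        rcases h1 with h1 | h1
        · exact h1
        · exact absurd h1 hI
      · push_neg at hI
        by_cases hJ : a.imJ ≠ 0
        · have h1 := congrArg QuaternionAlgebra.imJ haev
          simp at h1
          rcases h1 with h1 | h1
          · exact h1
          · exact absurd h1 hJ
        · push_neg at hJ
          have hK : a.imK ≠ 0 := him hI hJ
          have h1 := congrArg QuaternionAlgebra.imK haev
          simp at h1
          rcases h1 with h1 | h1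
          · exact h1
          · exact absurd h1 hK
    have hv : rr.coeff 0 = 0 := by
      have h1 := congrArg QuaternionAlgebra.re haev
      simp [hu] at h1
      exact h1
    have hrr0 : rr = 0 := by rw [hr2, hu, hv]; simp
    exact (modByMonic_eq_zero_iff_dvd hΔ).1 hrr0
theorem coeff_quad_two (a2 a1 a0 : A) :
    (Polynomial.C a2 * X ^ 2 + Polynomial.C a1 * X + Polynomial.C a0).coeff 2 = a2 := by simp

theorem coeff_quad_one (a2 a1 a0 : A) :
    (Polynomial.C a2 * X ^ 2 + Polynomial.C a1 * X + Polynomial.C a0).coeff 1 = a1 := by simp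

theorem coeff_quad_zero (a2 a1 a0 : A) :
    (Polynomial.C a2 * X ^ 2 + Polynomial.C a1 * X + Polynomial.C a0).coeff 0 = a0 := by simp

theorem imp_ii_i (hα : α ≠ 0) (hβ : β ≠ 0) (hdiv : ∀ x : A, x ≠ 0 → IsUnit x)
    (𝔭 : A[X]) {n : K[X]} (hn : n.map (algebraMap K A) = 𝔭 * conjPoly 𝔭) (a : A)
    (hdvd : (X ^ 2 - Polynomial.C ((a + star a).re) * X
      + Polynomial.C ((a * star a).re)) ∣ n) :
    ∃ (b : A) (c : Aˣ), 𝔭.eval b = 0 ∧ a = ↑c * b * ↑c⁻¹ := by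
  haveI := nzd (α := α) (β := β) hdiv
  have inj : Function.Injective (algebraMap K A) := by
    rw [QuaternionAlgebra.coe_algebraMap]
    exact QuaternionAlgebra.coe_injective
  set t := (a + star a).re with ht
  set nr := (a * star a).re with hnr
  set Δ : K[X] := X ^ 2 - Polynomial.C t * X + Polynomial.C nr with hΔdef
  have hΔ : Δ.Monic := monic_delta t nr
  set D : A[X] := Δ.map (algebraMap K A) with hD
  have hDm : D.Monic := hΔ.map _
  have hDcomm : ∀ f : A[X], D * f = f * D := fun f => map_comm Δ f
  have hDconj : conjPoly D = D := conjPoly_map Δ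
  have hdegD : D.degree = 2 := by
    rw [hD, degree_map_eq_of_injective inj, degree_delta]
  have hDeval : ∀ x : A, D.eval x = x * x - ((t : K) : A) * x + ((nr : K) : A) := fun x =>
    eval_D t nr x
  obtain ⟨m, hm⟩ := hdvd
  set q := 𝔭 /ₘ D with hq
  set rr := 𝔭 %ₘ D with hrr
  have hsplit : rr + D * q = 𝔭 := modByMonic_add_div 𝔭 D
  have hdegrr : rr.degree ≤ 1 := by
    have h2 := degree_modByMonic_lt 𝔭 hDm
    rw [hdegD] at h2
    exact deg_le_one_of_lt_two h2
  set u := rr.coeff 1 with hu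
  set v := rr.coeff 0 with hv
  have hrr2 : rr = Polynomial.C u * X + Polynomial.C v := eq_X_add_C_of_degree_le_one hdegrr
  have hrrbar : conjPoly rr = Polynomial.C (star u) * X + Polynomial.C (star v) := by
    rw [hrr2, conjPoly_add, conjPoly_mul, conjPoly_C, conjPoly_C, conjPoly_X, X_mul]
  have hpbar : conjPoly 𝔭 = conjPoly q * D + conjPoly rr := by
    conv_lhs => rw [← hsplit]
    rw [conjPoly_add, conjPoly_mul, hDconj, add_comm]
  have hexp : D * (m.map (algebraMap K A))
      = rr * conjPoly q * D + rr * conjPoly rr + D * q * (conjPoly q * D)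
        + D * q * conjPoly rr := by
    have h1 : n.map (algebraMap K A) = D * (m.map (algebraMap K A)) := by
      rw [hm, Polynomial.map_mul]
    rw [← h1, hn]
    conv_lhs => rw [hpbar, ← hsplit]
    noncomm_ring
  set w : A[X] := m.map (algebraMap K A)
      - (q * (conjPoly q * D) + q * conjPoly rr + rr * conjPoly q) with hw
  have hkey : rr * conjPoly rr = D * w := by
    rw [hw, mul_sub, mul_add, mul_add, hDcomm (rr * conjPoly q),
      ← mul_assoc D q (conjPoly q * D), ← mul_assoc D q (conjPoly rr), hexp]
    abel
  have hdegw : w.degree ≤ 0 := by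
    by_cases hw0 : w = 0
    · rw [hw0, degree_zero]; exact bot_le
    have hlhs : (rr * conjPoly rr).degree ≤ 2 := by
      refine le_trans (degree_mul_le _ _) ?_
      have d2 : (conjPoly rr).degree ≤ 1 := by rw [hrrbar]; exact degree_linear_le
      calc rr.degree + (conjPoly rr).degree ≤ 1 + 1 := add_le_add hdegrr d2
        _ = 2 := by decide
    rw [hkey, degree_mul, hdegD] at hlhs
    exact deg_le_zero_of_two_add hlhs
  set w0 := w.coeff 0 with hw0def
  have hwC : w = Polynomial.C w0 := eq_C_of_degree_le_zero hdegw
  have hCeq : Polynomial.C (u * star u) * X ^ 2 + Polynomial.C (u * star v + v * star u) * X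
      + Polynomial.C (v * star v) = D * Polynomial.C w0 := by
    rw [← linear_mul_linear, ← hrr2, ← hrrbar, hkey, hwC]
  have coeffD : ∀ k, (D * Polynomial.C w0).coeff k = (algebraMap K A) (Δ.coeff k) * w0 := by
    intro k
    rw [coeff_mul_C, hD, coeff_map]
  have hΔ2 : Δ.coeff 2 = 1 := by rw [hΔdef]; simp [coeff_X_pow]
  have hΔ1 : Δ.coeff 1 = -t := by rw [hΔdef]; simp [coeff_X_pow]
  have hΔ0 : Δ.coeff 0 = nr := by rw [hΔdef]; simp [coeff_X_pow]
  have e2 : u * star u = w0 := by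
    have h2 : (Polynomial.C (u * star u) * X ^ 2 + Polynomial.C (u * star v + v * star u) * X
        + Polynomial.C (v * star v)).coeff 2 = (D * Polynomial.C w0).coeff 2 := by rw [hCeq]
    rw [coeffD 2, hΔ2, map_one, one_mul, coeff_quad_two] at h2
    exact h2
  have e1 : u * star v + v * star u = -(((t : K) : A) * w0) := by
    have h2 : (Polynomial.C (u * star u) * X ^ 2 + Polynomial.C (u * star v + v * star u) * X
        + Polynomial.C (v * star v)).coeff 1 = (D * Polynomial.C w0).coeff 1 := by rw [hCeq]
    rw [coeffD 1, hΔ1, map_neg, neg_mul, QuaternionAlgebra.coe_algebraMap,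
      coeff_quad_one] at h2
    exact h2
  have e0 : v * star v = ((nr : K) : A) * w0 := by
    have h2 : (Polynomial.C (u * star u) * X ^ 2 + Polynomial.C (u * star v + v * star u) * X
        + Polynomial.C (v * star v)).coeff 0 = (D * Polynomial.C w0).coeff 0 := by rw [hCeq]
    rw [coeffD 0, hΔ0, QuaternionAlgebra.coe_algebraMap, coeff_quad_zero] at h2
    exact h2
  by_cases hu0 : u = 0
  · -- the remainder is constant; it must vanish, so a itself is a root
    have hw00 : w0 = 0 := by rw [← e2, hu0, zero_mul]
    have hv0 : v = 0 := by
      by_contra hv0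
      have := (hdiv v hv0).mul_right_eq_zero.1 (by rw [e0, hw00, mul_zero])
      exact hv0 (by rw [← star_star v, this, star_zero])
    have hrr0 : rr = 0 := by rw [hrr2, hu0, hv0]; simp
    have hroot : 𝔭.eval a = 0 := by
      rw [← hsplit, hrr0, zero_add, hDcomm, eval_mul_eq_zero]
      rw [hDeval a, coe_trace, coe_norm, charpoly_id]
    exact ⟨a, 1, hroot, by simp⟩
  · obtain ⟨uu, huu⟩ := hdiv u hu0
    set iu : A := ↑uu⁻¹ with hiu
    have hinv1 : u * iu = 1 := by rw [← huu, hiu, Units.mul_inv]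
    have hinv2 : iu * u = 1 := by rw [← huu, hiu, Units.inv_mul]
    set b : A := -(iu * v) with hb
    have hub : u * b = -v := by rw [hb, mul_neg, ← mul_assoc, hinv1, one_mul]
    have hsbar : star b = -(star v * star iu) := by rw [hb, star_neg, star_mul]
    have hstarinv1 : star iu * star u = 1 := by rw [← star_mul, hinv1, star_one]
    have hstarinv2 : star u * star iu = 1 := by rw [← star_mul, hinv2, star_one]
    have hw0ne : w0 ≠ 0 := by
      rw [← e2]
      refine mul_ne_zero hu0 fun hs => hu0 ?_
      rw [← star_star u, hs, star_zero]
    -- trace of b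
    have htr : b + star b = ((t : K) : A) := by
      have hX : u * ((b + star b) * star u) = ((t : K) : A) * w0 := by
        have c1 : u * (b * star u) = -(v * star u) := by
          rw [← mul_assoc, hub, neg_mul]
        have c2 : u * (star b * star u) = -(u * star v) := by
          rw [hsbar, neg_mul, mul_neg, mul_assoc, hstarinv1, mul_one]
        rw [add_mul, mul_add, c1, c2, ← neg_add, add_comm (v * star u), e1, neg_neg, ← e2]
      have hcen : b + star b = ((2 * b.re : K) : A) := by
        rw [QuaternionAlgebra.self_add_star']; simp
      rw [hcen] at hX ⊢
      have hX2 : ((2 * b.re : K) : A) * w0 = ((t : K) : A) * w0 := by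
        rw [← hX, ← e2, QuaternionAlgebra.coe_commutes, mul_assoc,
          QuaternionAlgebra.coe_commutes]
      have := mul_right_cancel₀ hw0ne hX2
      rw [this]
    -- norm of b
    have hno : b * star b = ((nr : K) : A) := by
      rw [hb, hsbar, neg_mul_neg]
      have h1 : iu * v * (star v * star iu) = iu * (v * star v) * star iu := by noncomm_ring
      rw [h1, e0, ← e2]
      have h2 : iu * (((nr : K) : A) * (u * star u)) = ((nr : K) : A) * (iu * (u * star u)) := by
        rw [QuaternionAlgebra.coe_commutes, ← mul_assoc]
        exact (QuaternionAlgebra.coe_commutes _ _).symm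
      have h3 : (iu * (u * star u)) * star iu = 1 := by
        rw [← mul_assoc iu u, hinv2, one_mul, hstarinv2]
      rw [h2, mul_assoc, h3, mul_one]
    -- b is a root of 𝔭
    have hDb : D.eval b = 0 := by
      rw [hDeval b, ← htr, ← hno, charpoly_id]
    have hroot : 𝔭.eval b = 0 := by
      rw [← hsplit, eval_add, hDcomm, eval_mul_eq_zero hDb, add_zero, hrr2, eval_add,
        eval_C_mul, eval_X, eval_C, hub]
      abel
    -- b is conjugate to a
    have htra : a + star a = ((t : K) : A) := (coe_trace a).symm
    have hnoa : a * star a = ((nr : K) : A) := (coe_norm a).symm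
    obtain ⟨c, hc⟩ := conj_of_trace_norm hα hβ hdiv a b (by rw [htra, htr])
      (by rw [hnoa, hno])
    exact ⟨b, c, hroot, hc⟩
end Aux

/-- Let `A = (α,β/K)` be a division quaternion algebra over a field `K`,
`𝔭 ∈ A[X]` non-constant and `a ∈ A` nonzero.  Let `n ∈ K[X]` be the norm `N(𝔭) = 𝔭·𝔭̄`.
The following are equivalent: (i) `a` is conjugate to a root `b` of `𝔭`;
(ii) the characteristic polynomial `Δ_a = X² − Tr(a)·X + N(a)` divides `n` in `K[X]`;
(iii) `a` is a root of `n`. -/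
theorem conjugate_root_iff_charpoly_dvd_norm {K : Type*} [Field K] (α β : K)
    (hα : α ≠ 0) (hβ : β ≠ 0)
    (hdiv : ∀ x : ℍ[K,α,β], x ≠ 0 → IsUnit x)
    (𝔭 : Polynomial ℍ[K,α,β]) (hdeg : 0 < 𝔭.degree)
    (a : ℍ[K,α,β]) (ha : a ≠ 0)
    (n : K[X]) (hn : n.map (algebraMap K ℍ[K,α,β]) = 𝔭 * conjPoly 𝔭) :
    ((∃ (b : ℍ[K,α,β]) (c : ℍ[K,α,β]ˣ), 𝔭.eval b = 0 ∧
        a = (c : ℍ[K,α,β]) * b * ((c⁻¹ : ℍ[K,α,β]ˣ) : ℍ[K,α,β])) ↔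
      (Polynomial.X ^ 2 - Polynomial.C ((a + star a).re) * Polynomial.X
        + Polynomial.C ((a * star a).re)) ∣ n) ∧
    ((Polynomial.X ^ 2 - Polynomial.C ((a + star a).re) * Polynomial.X
        + Polynomial.C ((a * star a).re)) ∣ n ↔ Polynomial.aeval a n = 0) := by
  constructor
  · constructor
    · rintro ⟨b, c, hb, hc⟩
      exact Aux.imp_iii_ii hdiv 𝔭 hn a (Aux.imp_i_iii hdiv 𝔭 hdeg hn a b c hb hc)
    · intro h
      exact Aux.imp_ii_i hα hβ hdiv 𝔭 hn a h
  · constructor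
    · rintro ⟨m, hm⟩
      rw [hm, map_mul, Aux.aeval_delta, zero_mul]
    · intro h
      exact Aux.imp_iii_ii hdiv 𝔭 hn a h
end
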